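/- arXiv:2310.01910 — 11 statements merged into one kernel-verified Lean document; each statement's English description precedes it below -/
import Mathlib

section
/- Let K be a nontrivial commutative semiring that is positive and multiplicatively cancellative. Then K embeds into a positive semifield F, i.e., there is an injective semiring homomorphism from K into F. Moreover, if K is additively cancellative, then F can be chosen additively cancellative; and if K is naturally totally ordered, then F can be chosen naturally totally ordered. -/
/-! # Preliminaries: K-relations over semirings -/

open Finset

variable {V : Type*}

/-- A tuple over the finite set `X` of variables: it assigns to each variable
`a ∈ X` a value in its domain `Dom a`. -/
abbrev Tup (Dom : V → Type*) (X : Finset V) : Type _ :=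
  ∀ a : X, Dom a

/-- Restriction `t[Y]` of a tuple `t` over `X` to a subset `Y ⊆ X`. -/
def Tup.restrict {Dom : V → Type*} {X Y : Finset V} (h : Y ⊆ X) (t : Tup Dom X) :
    Tup Dom Y :=
  fun a => t ⟨a.1, h a.2⟩

open Classical in
/-- The marginal of a `K`-relation `R` over a schema `X` on a subset `Y ⊆ X`,
evaluated at a tuple `u` over `Y`: the sum of `R t` over all tuples `t` over `X`
with `t[Y] = u`. -/
noncomputable def margin {K : Type*} [CommSemiring K] [DecidableEq V]
    {Dom : V → Type*} [∀ a, Fintype (Dom a)] {X Y : Finset V}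
    (R : Tup Dom X → K) (h : Y ⊆ X) (u : Tup Dom Y) : K :=
  ∑ t : Tup Dom X, if Tup.restrict h t = u then R t else 0

open Classical in
/-- `c_S(u)`: the product of the marginal `S[Z]` over all tuples `v` in the
support of `S[Z]` different from `u` (empty products are `1`). -/
noncomputable def cfun {K : Type*} [CommSemiring K] [DecidableEq V]
    {Dom : V → Type*} [∀ a, Fintype (Dom a)] {Y Z : Finset V}
    (S : Tup Dom Y → K) (h : Z ⊆ Y) (u : Tup Dom Z) : K :=
  ∏ v : Tup Dom Z, if margin S h v ≠ 0 ∧ v ≠ u then margin S h v else 1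

/-- The join `R ⋈ S` of a `K`-relation `R` over `X` and a `K`-relation `S` over `Y`,
realized on the schema `T = X ∪ Y`:
`(R ⋈ S)(t) = R(t[X]) ⬝ S(t[Y]) ⬝ c_S(t[X ∩ Y])`. -/
noncomputable def joinOn {K : Type*} [CommSemiring K] [DecidableEq V]
    {Dom : V → Type*} [∀ a, Fintype (Dom a)] {X Y T : Finset V}
    (R : Tup Dom X → K) (S : Tup Dom Y → K)
    (hX : X ⊆ T) (hY : Y ⊆ T) (_hT : T ⊆ X ∪ Y) : Tup Dom T → K :=
  fun t =>
    R (Tup.restrict hX t) * S (Tup.restrict hY t) *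
      cfun (Z := X ∩ Y) S Finset.inter_subset_right
        (Tup.restrict ((Finset.inter_subset_right (s₁ := X)).trans hY) t)

/-- A `K`-relation `R` over the schema `S` satisfies the conditional independence
`CI(X; Y, Z)` (for `X, Y, Z ⊆ S`) if for every tuple `t` over `X ∪ Y ∪ Z`,
`R(t[X∪Y]) ⬝ R(t[X∪Z]) = R(t[X∪Y∪Z]) ⬝ R(t[X])`, all values being marginals of `R`. -/
def satCI {K : Type*} [CommSemiring K] [DecidableEq V]
    {Dom : V → Type*} [∀ a, Fintype (Dom a)] {S X Y Z : Finset V}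
    (R : Tup Dom S → K) (hX : X ⊆ S) (hY : Y ⊆ S) (hZ : Z ⊆ S) : Prop :=
  ∀ t : Tup Dom (X ∪ Y ∪ Z),
    margin R (Finset.union_subset hX hY) (Tup.restrict Finset.subset_union_left t) *
      margin R (Finset.union_subset hX hZ)
        (Tup.restrict (Finset.union_subset
          (Finset.subset_union_left.trans Finset.subset_union_left)
          Finset.subset_union_right) t) =
    margin R (Finset.union_subset (Finset.union_subset hX hY) hZ) t *
      margin R hX
        (Tup.restrict (Finset.subset_union_left.trans Finset.subset_union_left) t)

/-- A `K`-relation `R` over the schema `S` satisfies the functional dependency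
`U → W` if any two tuples in the support of `R` agreeing on `U` agree on `W`. -/
def satFD {K : Type*} [Zero K] {Dom : V → Type*} {S U W : Finset V}
    (R : Tup Dom S → K) (hU : U ⊆ S) (hW : W ⊆ S) : Prop :=
  ∀ t t' : Tup Dom S, R t ≠ 0 → R t' ≠ 0 →
    Tup.restrict hU t = Tup.restrict hU t' → Tup.restrict hW t = Tup.restrict hW t'

/-- Two `K`-relations over the same schema are equivalent (up to normalization),
`R ≡ R'`, if `aR = bR'` for some nonzero `a, b ∈ K`. -/
def equivRel {K : Type*} [CommSemiring K] {Dom : V → Type*} {X : Finset V}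
    (R R' : Tup Dom X → K) : Prop :=
  ∃ a b : K, a ≠ 0 ∧ b ≠ 0 ∧ ∀ t, a * R t = b * R' t

/-- `K` is `⊕`-positive: `a + b = 0` implies `a = b = 0`. -/
def plusPos (K : Type*) [CommSemiring K] : Prop :=
  ∀ a b : K, a + b = 0 → a = 0 ∧ b = 0

/-- `K` has no divisors of zero. -/
def noZD (K : Type*) [CommSemiring K] : Prop :=
  ∀ a b : K, a * b = 0 → a = 0 ∨ b = 0

/-- `K` is positive: `⊕`-positive and without zero divisors. -/
def posSemiring (K : Type*) [CommSemiring K] : Prop :=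
  plusPos K ∧ noZD K

/-- `K` is multiplicatively cancellative. -/
def mulCanc (K : Type*) [CommSemiring K] : Prop :=
  ∀ a b c : K, a ≠ 0 → a * b = a * c → b = c

/-- `K` is additively cancellative. -/
def addCanc (K : Type*) [CommSemiring K] : Prop :=
  ∀ a b c : K, a + b = a + c → b = c

/-- `K` is naturally totally ordered: the preorder `a ≤ b ↔ ∃ c, a + c = b`
is antisymmetric and total. -/
def natTotOrd (K : Type*) [CommSemiring K] : Prop :=
  (∀ a b : K, (∃ c, a + c = b) → (∃ c, b + c = a) → a = b) ∧
    (∀ a b : K, (∃ c, a + c = b) ∨ (∃ c, b + c = a))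

/-- `K` is a semifield: every nonzero element has a multiplicative inverse. -/
def isSemifield (K : Type*) [CommSemiring K] : Prop :=
  ∀ a : K, a ≠ 0 → ∃ b, a * b = 1

theorem subL [DecidableEq V] {X Y Z : Finset V} : X ⊆ X ∪ Y ∪ Z :=
  Finset.subset_union_left.trans Finset.subset_union_left

theorem subM [DecidableEq V] {X Y Z : Finset V} : Y ⊆ X ∪ Y ∪ Z :=
  Finset.subset_union_right.trans Finset.subset_union_left

theorem subR [DecidableEq V] {X Y Z : Finset V} : Z ⊆ X ∪ Y ∪ Z :=
  Finset.subset_union_right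

theorem subXY [DecidableEq V] {X Y Z : Finset V} : X ∪ Y ⊆ X ∪ Y ∪ Z :=
  Finset.subset_union_left

theorem subXZ [DecidableEq V] {X Y Z : Finset V} : X ∪ Z ⊆ X ∪ Y ∪ Z :=
  Finset.union_subset subL subR

theorem unionSplit [DecidableEq V] {X Y Z : Finset V} :
    X ∪ Y ∪ Z ⊆ (X ∪ Y) ∪ (X ∪ Z) := by
  intro a ha
  simp only [Finset.mem_union] at ha ⊢
  tauto

/-! Clearing denominators turns an equation among finitely many fractions into one in `K`, so
positivity of `+`, additive cancellation and the natural total order pass from `K` to its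
localization at `K⁰`. That localization is a semifield because, `K` having no zero divisors, the
numerator of a nonzero fraction is itself an admissible denominator. -/

open scoped nonZeroDivisors

theorem isCancelMulZero_of_mulCanc {K : Type*} [CommSemiring K] (h : mulCanc K) :
    IsCancelMulZero K :=
  have : IsLeftCancelMulZero K := ⟨fun ha _ _ => h _ _ _ ha⟩
  IsLeftCancelMulZero.to_isCancelMulZero

theorem isRegular_of_mem_nonZeroDivisors {M₀ : Type*} [MonoidWithZero M₀] [IsCancelMulZero M₀]
    {m : M₀} (hm : m ∈ M₀⁰) : IsRegular m := by
  rcases subsingleton_or_nontrivial M₀ with _ | _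
  · rw [Subsingleton.elim m 0]
    exact isRegular_iff_subsingleton.mpr ‹_›
  · exact IsRegular.of_ne_zero (nonZeroDivisors.ne_zero hm)

theorem noZD_of_isSemifield {F : Type*} [CommSemiring F] (h : isSemifield F) : noZD F := by
  intro a b hab
  by_cases ha : a = 0
  · exact Or.inl ha
  obtain ⟨c, hc⟩ := h a ha
  refine Or.inr ?_
  calc b = c * a * b := by rw [mul_comm c, hc, one_mul]
    _ = 0 := by rw [mul_assoc, hab, mul_zero]

section Localization

variable {K F : Type*} [CommSemiring K] [CommSemiring F] [Algebra K F]

theorem isSemifield_of_isLocalization_nonZeroDivisors [NoZeroDivisors K]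
    [IsLocalization K⁰ F] : isSemifield F := by
  intro x hx
  obtain ⟨⟨a, s⟩, rfl⟩ := IsLocalization.mk'_surjective K⁰ x
  have ha : a ≠ 0 := IsLocalization.ne_zero_of_mk'_ne_zero hx
  exact ⟨IsLocalization.mk' F (s : K) ⟨a, mem_nonZeroDivisors_of_ne_zero ha⟩,
    IsLocalization.mk'_mul_mk'_eq_one' _ _ _⟩

theorem IsLocalization.exists_common_denominator (M : Submonoid K) [IsLocalization M F]
    {ι : Type*} [Finite ι] (x : ι → F) :
    ∃ d : M, ∃ a : ι → K, ∀ i, algebraMap K F d * x i = algebraMap K F (a i) := by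
  obtain ⟨d, hd⟩ := IsLocalization.exist_integer_multiples_of_finite M x
  choose a ha using hd
  exact ⟨d, a, fun i => by rw [ha i, Algebra.smul_def]⟩

theorem plusPos_of_isLocalization (M : Submonoid K) [IsLocalization M F]
    (hinj : Function.Injective (algebraMap K F)) (hK : plusPos K) : plusPos F := by
  intro x y hxy
  obtain ⟨d, a, ha⟩ := IsLocalization.exists_common_denominator M ![x, y]
  have hx : algebraMap K F d * x = algebraMap K F (a 0) := ha 0
  have hy : algebraMap K F d * y = algebraMap K F (a 1) := ha 1
  obtain ⟨h0, h1⟩ := hK (a 0) (a 1) <| hinj <| by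
    rw [map_add, ← hx, ← hy, ← mul_add, hxy, mul_zero, map_zero]
  have hd := IsLocalization.map_units F d
  exact ⟨hd.mul_left_cancel (by rw [hx, h0, map_zero, mul_zero]),
    hd.mul_left_cancel (by rw [hy, h1, map_zero, mul_zero])⟩

theorem addCanc_of_isLocalization (M : Submonoid K) [IsLocalization M F]
    (hinj : Function.Injective (algebraMap K F)) (hK : addCanc K) : addCanc F := by
  intro x y z hxyz
  obtain ⟨d, a, ha⟩ := IsLocalization.exists_common_denominator M ![x, y, z]
  have hx : algebraMap K F d * x = algebraMap K F (a 0) := ha 0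
  have hy : algebraMap K F d * y = algebraMap K F (a 1) := ha 1
  have hz : algebraMap K F d * z = algebraMap K F (a 2) := ha 2
  have h12 : a 1 = a 2 := hK (a 0) _ _ <| hinj <| by
    rw [map_add, map_add, ← hx, ← hy, ← hz, ← mul_add, ← mul_add, hxyz]
  exact (IsLocalization.map_units F d).mul_left_cancel (by rw [hy, hz, h12])

theorem natTotOrd_of_isLocalization (M : Submonoid K) [IsLocalization M F]
    (hinj : Function.Injective (algebraMap K F)) (hK : natTotOrd K) : natTotOrd F := by
  obtain ⟨hanti, htotal⟩ := hK
  constructor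
  · rintro x y ⟨p, hxp⟩ ⟨q, hyq⟩
    obtain ⟨d, a, ha⟩ := IsLocalization.exists_common_denominator M ![x, y, p, q]
    have hx : algebraMap K F d * x = algebraMap K F (a 0) := ha 0
    have hy : algebraMap K F d * y = algebraMap K F (a 1) := ha 1
    have hp : algebraMap K F d * p = algebraMap K F (a 2) := ha 2
    have hq : algebraMap K F d * q = algebraMap K F (a 3) := ha 3
    have hxy : a 0 = a 1 := hanti _ _
      ⟨a 2, hinj <| by rw [map_add, ← hx, ← hp, ← mul_add, hxp, hy]⟩
      ⟨a 3, hinj <| by rw [map_add, ← hy, ← hq, ← mul_add, hyq, hx]⟩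
    exact (IsLocalization.map_units F d).mul_left_cancel (by rw [hx, hy, hxy])
  · intro x y
    obtain ⟨d, a, ha⟩ := IsLocalization.exists_common_denominator M ![x, y]
    have lift_le : ∀ {u v : F} {b c : K}, algebraMap K F d * u = algebraMap K F b →
        algebraMap K F d * v = algebraMap K F c → (∃ e, b + e = c) → ∃ w, u + w = v := by
      rintro u v b c hu hv ⟨e, he⟩
      refine ⟨IsLocalization.mk' F e d, (IsLocalization.map_units F d).mul_left_cancel ?_⟩
      rw [mul_add, hu, IsLocalization.mk'_spec', ← map_add, he, hv]
    exact (htotal (a 0) (a 1)).imp (lift_le (ha 0) (ha 1)) (lift_le (ha 1) (ha 0))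

end Localization

theorem positive_mulCancellative_embeds_positive_semifield_general
    (K : Type) [CommSemiring K]
    (hpos : posSemiring K) (hmc : mulCanc K) :
    ∃ (F : Type) (_ : CommSemiring F) (f : K →+* F),
      Function.Injective f ∧ posSemiring F ∧ isSemifield F ∧
        (addCanc K → addCanc F) ∧ (natTotOrd K → natTotOrd F) := by
  have := isCancelMulZero_of_mulCanc hmc
  have hinj : Function.Injective (algebraMap K (Localization K⁰)) :=
    IsLocalization.injectiveₛ _ fun _ => isRegular_of_mem_nonZeroDivisors
  have hF : isSemifield (Localization K⁰) :=
    isSemifield_of_isLocalization_nonZeroDivisors (K := K)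
  exact ⟨Localization K⁰, inferInstance, algebraMap K _, hinj,
    ⟨plusPos_of_isLocalization K⁰ hinj hpos.1, noZD_of_isSemifield hF⟩, hF,
    addCanc_of_isLocalization K⁰ hinj, natTotOrd_of_isLocalization K⁰ hinj⟩

/-- Any nontrivial positive, multiplicatively cancellative commutative semiring
embeds in a positive semifield; moreover the semifield inherits additive
cancellativity and natural total orderedness from `K`. -/
theorem positive_mulCancellative_embeds_positive_semifield
    (K : Type) [CommSemiring K] [Nontrivial K]
    (hpos : posSemiring K) (hmc : mulCanc K) :
    ∃ (F : Type) (_ : CommSemiring F) (f : K →+* F),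
      Function.Injective f ∧ posSemiring F ∧ isSemifield F ∧
        (addCanc K → addCanc F) ∧ (natTotOrd K → natTotOrd F) :=
  positive_mulCancellative_embeds_positive_semifield_general K hpos hmc
end

section
/- Every nontrivial commutative semiring that is naturally totally ordered, additively cancellative, and multiplicatively cancellative embeds into a linearly ordered field: there is an injective semiring homomorphism f from K into a linearly ordered field F such that for all a, b ∈ K, a ≤ b in the natural order of K if and only if f(a) ≤ f(b) in F. -/
/-! # Preliminaries: K-relations over semirings -/

open Finset

variable {V : Type*}

section DiffRing
variable {K : Type} [CommSemiring K]

def diffSetoid (hadd : addCanc K) : Setoid (K × K) where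
  r p q := p.1 + q.2 = q.1 + p.2
  iseqv := by
    refine ⟨fun p => rfl, fun h => h.symm, fun {p q s} h1 h2 => ?_⟩
    · change p.1 + s.2 = s.1 + p.2
      apply hadd (q.1 + q.2)
      calc (q.1 + q.2) + (p.1 + s.2) = (p.1 + q.2) + (q.1 + s.2) := by ring
        _ = (q.1 + p.2) + (s.1 + q.2) := by rw [h1, h2]
        _ = (q.1 + q.2) + (s.1 + p.2) := by ring

abbrev Diff (hadd : addCanc K) : Type := Quotient (diffSetoid hadd)

variable {hadd : addCanc K}

lemma Diff.sound {p q : K × K} (h : p.1 + q.2 = q.1 + p.2) :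
    Quotient.mk (diffSetoid hadd) p = Quotient.mk (diffSetoid hadd) q :=
  Quotient.sound h

lemma Diff.exact {p q : K × K}
    (h : Quotient.mk (diffSetoid hadd) p = Quotient.mk (diffSetoid hadd) q) :
    p.1 + q.2 = q.1 + p.2 :=
  Quotient.exact h

private def mulFun (p q : K × K) : K × K :=
  (p.1 * q.1 + p.2 * q.2, p.1 * q.2 + p.2 * q.1)

private lemma mulFun_left {p₁ p₂ q : K × K} (h : p₁.1 + p₂.2 = p₂.1 + p₁.2) :
    (mulFun p₁ q).1 + (mulFun p₂ q).2 = (mulFun p₂ q).1 + (mulFun p₁ q).2 := by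
  unfold mulFun; dsimp only
  have e1 : q.1*(p₁.1 + p₂.2) = q.1*(p₂.1 + p₁.2) := by rw [h]
  have e2 : q.2*(p₂.1 + p₁.2) = q.2*(p₁.1 + p₂.2) := by rw [h]
  calc (p₁.1*q.1 + p₁.2*q.2) + (p₂.1*q.2 + p₂.2*q.1)
      = q.1*(p₁.1 + p₂.2) + q.2*(p₂.1 + p₁.2) := by ring
    _ = q.1*(p₂.1 + p₁.2) + q.2*(p₁.1 + p₂.2) := by rw [e1, e2]
    _ = (p₂.1*q.1 + p₂.2*q.2) + (p₁.1*q.2 + p₁.2*q.1) := by ring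

private lemma mulFun_comm (p q : K × K) : mulFun p q = mulFun q p := by
  unfold mulFun; congr 1 <;> ring

instance : Add (Diff hadd) :=
  ⟨Quotient.map₂ (fun p q => (p.1 + q.1, p.2 + q.2)) (by
    intro p₁ p₂ h1 q₁ q₂ h2
    show (p₁.1 + q₁.1) + (p₂.2 + q₂.2) = (p₂.1 + q₂.1) + (p₁.2 + q₁.2)
    replace h1 : p₁.1 + p₂.2 = p₂.1 + p₁.2 := h1
    replace h2 : q₁.1 + q₂.2 = q₂.1 + q₁.2 := h2
    calc (p₁.1 + q₁.1) + (p₂.2 + q₂.2) = (p₁.1 + p₂.2) + (q₁.1 + q₂.2) := by ring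
      _ = (p₂.1 + p₁.2) + (q₂.1 + q₁.2) := by rw [h1, h2]
      _ = (p₂.1 + q₂.1) + (p₁.2 + q₁.2) := by ring)⟩

instance : Mul (Diff hadd) :=
  ⟨Quotient.map₂ mulFun (by
    intro p₁ p₂ h1 q₁ q₂ h2
    replace h1 : p₁.1 + p₂.2 = p₂.1 + p₁.2 := h1
    replace h2 : q₁.1 + q₂.2 = q₂.1 + q₁.2 := h2
    have t1 := mulFun_left (q := q₁) h1
    have t2 := mulFun_left (q := p₂) h2
    rw [mulFun_comm q₁ p₂, mulFun_comm q₂ p₂] at t2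
    show (mulFun p₁ q₁).1 + (mulFun p₂ q₂).2 = (mulFun p₂ q₂).1 + (mulFun p₁ q₁).2
    apply hadd ((mulFun p₂ q₁).1 + (mulFun p₂ q₁).2)
    calc ((mulFun p₂ q₁).1 + (mulFun p₂ q₁).2) + ((mulFun p₁ q₁).1 + (mulFun p₂ q₂).2)
        = ((mulFun p₁ q₁).1 + (mulFun p₂ q₁).2) + ((mulFun p₂ q₁).1 + (mulFun p₂ q₂).2) := by ring
      _ = ((mulFun p₂ q₁).1 + (mulFun p₁ q₁).2) + ((mulFun p₂ q₂).1 + (mulFun p₂ q₁).2) := by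
            rw [t1, t2]
      _ = ((mulFun p₂ q₁).1 + (mulFun p₂ q₁).2) + ((mulFun p₂ q₂).1 + (mulFun p₁ q₁).2) := by ring)⟩

instance : Neg (Diff hadd) :=
  ⟨Quotient.map (fun p => (p.2, p.1)) (by
    intro p q h
    replace h : p.1 + q.2 = q.1 + p.2 := h
    show p.2 + q.1 = q.2 + p.1
    calc p.2 + q.1 = q.1 + p.2 := add_comm _ _
      _ = p.1 + q.2 := h.symm
      _ = q.2 + p.1 := add_comm _ _)⟩

instance : Zero (Diff hadd) := ⟨Quotient.mk (diffSetoid hadd) (0, 0)⟩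
instance : One (Diff hadd) := ⟨Quotient.mk (diffSetoid hadd) (1, 0)⟩

instance diffCommRing : CommRing (Diff hadd) where
  add := (· + ·)
  mul := (· * ·)
  neg := (- ·)
  zero := 0
  one := 1
  nsmul := nsmulRec
  zsmul := zsmulRec
  add_assoc x y z := by
    induction x using Quotient.inductionOn
    induction y using Quotient.inductionOn
    induction z using Quotient.inductionOn
    exact Diff.sound (by dsimp only; ring)
  zero_add x := by
    induction x using Quotient.inductionOn
    exact Diff.sound (by dsimp only; ring)
  add_zero x := by
    induction x using Quotient.inductionOn
    exact Diff.sound (by dsimp only; ring)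
  add_comm x y := by
    induction x using Quotient.inductionOn
    induction y using Quotient.inductionOn
    exact Diff.sound (by dsimp only; ring)
  neg_add_cancel x := by
    induction x using Quotient.inductionOn
    exact Diff.sound (by dsimp only; ring)
  mul_assoc x y z := by
    induction x using Quotient.inductionOn
    induction y using Quotient.inductionOn
    induction z using Quotient.inductionOn
    exact Diff.sound (by dsimp only [mulFun]; ring)
  one_mul x := by
    induction x using Quotient.inductionOn
    exact Diff.sound (by dsimp only [mulFun]; ring)
  mul_one x := by
    induction x using Quotient.inductionOn
    exact Diff.sound (by dsimp only [mulFun]; ring)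
  left_distrib x y z := by
    induction x using Quotient.inductionOn
    induction y using Quotient.inductionOn
    induction z using Quotient.inductionOn
    exact Diff.sound (by dsimp only [mulFun]; ring)
  right_distrib x y z := by
    induction x using Quotient.inductionOn
    induction y using Quotient.inductionOn
    induction z using Quotient.inductionOn
    exact Diff.sound (by dsimp only [mulFun]; ring)
  zero_mul x := by
    induction x using Quotient.inductionOn
    exact Diff.sound (by dsimp only [mulFun]; ring)
  mul_zero x := by
    induction x using Quotient.inductionOn
    exact Diff.sound (by dsimp only [mulFun]; ring)
  mul_comm x y := by
    induction x using Quotient.inductionOn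
    induction y using Quotient.inductionOn
    exact Diff.sound (by dsimp only [mulFun]; ring)

end DiffRing

section DiffRing2
variable {K : Type} [CommSemiring K] {hadd : addCanc K}

def iK (hadd : addCanc K) : K →+* Diff hadd where
  toFun a := Quotient.mk (diffSetoid hadd) (a, 0)
  map_zero' := rfl
  map_one' := rfl
  map_add' a b := Diff.sound (by dsimp only; ring)
  map_mul' a b := Diff.sound (by dsimp only [mulFun]; ring)

lemma iK_inj : Function.Injective (iK hadd) := by
  intro a b h
  have := Diff.exact h
  simpa using this

lemma diff_nontrivial [Nontrivial K] : Nontrivial (Diff hadd) := by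
  refine ⟨0, 1, fun h => ?_⟩
  have h2 : (0:K) = 1 := by simpa using Diff.exact h
  exact zero_ne_one h2

lemma diff_noZeroDivisors (hnat : natTotOrd K) (hmul : mulCanc K) :
    ∀ x y : Diff hadd, x * y = 0 → x = 0 ∨ y = 0 := by
  intro x y h
  induction x using Quotient.inductionOn with | h p => ?_
  induction y using Quotient.inductionOn with | h q => ?_
  obtain ⟨a, b⟩ := p
  obtain ⟨c, d⟩ := q
  have h' : a * c + b * d = a * d + b * c := by
    have := Diff.exact h
    dsimp only [mulFun] at this
    simpa using this
  have key : a = b ∨ c = d := by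
    have zmul : ∀ x y : K, x * y = 0 → x = 0 ∨ y = 0 := by
      intro x y hxy
      by_cases hx : x = 0
      · exact Or.inl hx
      · exact Or.inr (hmul x y 0 hx (by rw [hxy, mul_zero]))
    rcases hnat.2 b a with ⟨x, hx⟩ | ⟨x, hx⟩ <;> rcases hnat.2 d c with ⟨y, hy⟩ | ⟨y, hy⟩
    · -- b + x = a, d + y = c
      have e : (b*d + b*y + x*d + b*d) + x*y = (b*d + b*y + x*d + b*d) + 0 := by
        calc (b*d + b*y + x*d + b*d) + x*y = (b+x)*(d+y) + b*d := by ring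
          _ = a*c + b*d := by rw [hx, hy]
          _ = a*d + b*c := h'
          _ = (b+x)*d + b*(d+y) := by rw [hx, hy]
          _ = (b*d + b*y + x*d + b*d) + 0 := by ring
      rcases zmul x y (hadd _ _ _ e) with h0 | h0
      · exact Or.inl (by rw [← hx, h0, add_zero])
      · exact Or.inr (by rw [← hy, h0, add_zero])
    · -- b + x = a, c + y = d
      have e : (b*c + b*y + x*c + b*c) + x*y = (b*c + b*y + x*c + b*c) + 0 := by
        calc (b*c + b*y + x*c + b*c) + x*y = (b+x)*(c+y) + b*c := by ring
          _ = a*d + b*c := by rw [hx, hy]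
          _ = a*c + b*d := h'.symm
          _ = (b+x)*c + b*(c+y) := by rw [hx, hy]
          _ = (b*c + b*y + x*c + b*c) + 0 := by ring
      rcases zmul x y (hadd _ _ _ e) with h0 | h0
      · exact Or.inl (by rw [← hx, h0, add_zero])
      · exact Or.inr ((by rw [← hy, h0, add_zero]) : d = c).symm
    · -- a + x = b, d + y = c
      have e : (a*d + a*y + x*d + a*d) + x*y = (a*d + a*y + x*d + a*d) + 0 := by
        calc (a*d + a*y + x*d + a*d) + x*y = (a+x)*(d+y) + a*d := by ring
          _ = b*c + a*d := by rw [hx, hy]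
          _ = a*d + b*c := by ring
          _ = a*c + b*d := h'.symm
          _ = a*(d+y) + (a+x)*d := by rw [hx, hy]
          _ = (a*d + a*y + x*d + a*d) + 0 := by ring
      rcases zmul x y (hadd _ _ _ e) with h0 | h0
      · exact Or.inl ((by rw [← hx, h0, add_zero]) : b = a).symm
      · exact Or.inr (by rw [← hy, h0, add_zero])
    · -- a + x = b, c + y = d
      have e : (a*c + a*y + x*c + a*c) + x*y = (a*c + a*y + x*c + a*c) + 0 := by
        calc (a*c + a*y + x*c + a*c) + x*y = (a+x)*(c+y) + a*c := by ring
          _ = b*d + a*c := by rw [hx, hy]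
          _ = a*c + b*d := by ring
          _ = a*d + b*c := h'
          _ = a*(c+y) + (a+x)*c := by rw [hx, hy]
          _ = (a*c + a*y + x*c + a*c) + 0 := by ring
      rcases zmul x y (hadd _ _ _ e) with h0 | h0
      · exact Or.inl ((by rw [← hx, h0, add_zero]) : b = a).symm
      · exact Or.inr ((by rw [← hy, h0, add_zero]) : d = c).symm
  rcases key with h0 | h0
  · exact Or.inl (Diff.sound (by simpa using h0))
  · exact Or.inr (Diff.sound (by simpa using h0))

def diffCone (hnat : natTotOrd K) : RingCone (Diff hadd) where
  carrier := Set.range (iK hadd)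
  add_mem' := by
    rintro x y ⟨a, rfl⟩ ⟨b, rfl⟩
    exact ⟨a + b, map_add _ _ _⟩
  zero_mem' := ⟨0, map_zero _⟩
  mul_mem' := by
    rintro x y ⟨a, rfl⟩ ⟨b, rfl⟩
    exact ⟨a * b, map_mul _ _ _⟩
  one_mem' := ⟨1, map_one _⟩
  eq_zero_of_mem_of_neg_mem' := by
    rintro x ⟨a, rfl⟩ ⟨b, hb⟩
    have hab : iK hadd (a + b) = iK hadd 0 := by
      rw [map_add, map_zero, hb, add_neg_cancel]
    have hab' : a + b = 0 := iK_inj hab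
    have ha : a = 0 := hnat.1 a 0 ⟨b, hab'⟩ ⟨a, zero_add a⟩
    rw [ha, map_zero]

lemma diffCone_max (hnat : natTotOrd K) : HasMemOrNegMem (diffCone (hadd := hadd) hnat) := by
  constructor
  intro x
  induction x using Quotient.inductionOn with | h p => ?_
  obtain ⟨a, b⟩ := p
  rcases hnat.2 b a with ⟨c, hc⟩ | ⟨c, hc⟩
  · exact Or.inl ⟨c, Diff.sound (by dsimp only; rw [add_zero, add_comm, hc])⟩
  · refine Or.inr ⟨c, ?_⟩
    show Quotient.mk (diffSetoid hadd) (c, 0) = - Quotient.mk (diffSetoid hadd) (a, b)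
    exact Diff.sound (by dsimp only; rw [add_zero, add_comm c a, hc])

end DiffRing2

section FracField
variable (G : Type) [CommRing G] [LinearOrder G] [IsStrictOrderedRing G]

noncomputable def fracCone : RingCone (FractionRing G) where
  carrier := {x | ∃ a b : G, 0 ≤ a ∧ 0 < b ∧
    x * algebraMap G (FractionRing G) b = algebraMap G (FractionRing G) a}
  zero_mem' := ⟨0, 1, le_refl 0, zero_lt_one, by simp⟩
  one_mem' := ⟨1, 1, zero_le_one, zero_lt_one, by simp⟩
  add_mem' := by
    rintro x y ⟨a, b, ha, hb, hx⟩ ⟨c, d, hc, hd, hy⟩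
    refine ⟨a * d + c * b, b * d,
      add_nonneg (mul_nonneg ha hd.le) (mul_nonneg hc hb.le), mul_pos hb hd, ?_⟩
    have : (x + y) * algebraMap G (FractionRing G) (b * d)
        = (x * algebraMap G (FractionRing G) b) * algebraMap G (FractionRing G) d
          + (y * algebraMap G (FractionRing G) d) * algebraMap G (FractionRing G) b := by
      rw [map_mul]; ring
    rw [this, hx, hy, map_add, map_mul, map_mul]
  mul_mem' := by
    rintro x y ⟨a, b, ha, hb, hx⟩ ⟨c, d, hc, hd, hy⟩
    refine ⟨a * c, b * d, mul_nonneg ha hc, mul_pos hb hd, ?_⟩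
    have : (x * y) * algebraMap G (FractionRing G) (b * d)
        = (x * algebraMap G (FractionRing G) b) * (y * algebraMap G (FractionRing G) d) := by
      rw [map_mul]; ring
    rw [this, hx, hy, map_mul]
  eq_zero_of_mem_of_neg_mem' := by
    rintro x ⟨a, b, ha, hb, hx⟩ ⟨c, d, hc, hd, hx'⟩
    set A := algebraMap G (FractionRing G)
    have e1 : A (a * d + c * b) = 0 := by
      have h1 : (x * A b) * A d = A a * A d := by rw [hx]
      have h2 : (-x * A d) * A b = A c * A b := by rw [hx']
      rw [map_add, map_mul, map_mul, ← h1, ← h2]; ring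
    have e2 : a * d + c * b = 0 := by
      have := (IsFractionRing.to_map_eq_zero_iff (K := FractionRing G)).mp e1
      exact this
    have had : a * d = 0 := by
      have h1 : 0 ≤ a * d := mul_nonneg ha hd.le
      have h2 : 0 ≤ c * b := mul_nonneg hc hb.le
      nlinarith
    have ha0 : a = 0 := by
      rcases mul_eq_zero.mp had with h | h
      · exact h
      · exact absurd h hd.ne'
    have hxb : x * A b = 0 := by rw [hx, ha0, map_zero]
    rcases mul_eq_zero.mp hxb with h | h
    · exact h
    · exact absurd h (by
        simpa [A, IsFractionRing.to_map_eq_zero_iff] using hb.ne')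

noncomputable instance fracCone_max : HasMemOrNegMem (fracCone G) := by
  constructor
  intro x
  obtain ⟨a, b, hb, hx⟩ := IsFractionRing.div_surjective (A := G) x
  have hb0 : b ≠ 0 := nonZeroDivisors.ne_zero hb
  have hAb : algebraMap G (FractionRing G) b ≠ 0 := by
    simpa [IsFractionRing.to_map_eq_zero_iff] using hb0
  have hxb : x * algebraMap G (FractionRing G) b = algebraMap G (FractionRing G) a := by
    rw [← hx, div_mul_cancel₀ _ hAb]
  rcases lt_or_gt_of_ne hb0 with hbneg | hbpos
  · -- b < 0 : use (-a, -b)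
    have hxb' : x * algebraMap G (FractionRing G) (-b) = algebraMap G (FractionRing G) (-a) := by
      rw [map_neg, map_neg, mul_neg, hxb]
    rcases le_total 0 (-a) with hana | hana
    · exact Or.inl ⟨-a, -b, hana, neg_pos.mpr hbneg, hxb'⟩
    · refine Or.inr ⟨a, -b, ?_, neg_pos.mpr hbneg, ?_⟩
      · linarith
      · rw [map_neg, mul_neg, ← neg_mul, neg_neg, hxb]
  · rcases le_total 0 a with hana | hana
    · exact Or.inl ⟨a, b, hana, hbpos, hxb⟩
    · refine Or.inr ⟨-a, b, by linarith, hbpos, ?_⟩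
      rw [map_neg, neg_mul, hxb]

noncomputable def fracLOF : LinearOrder (FractionRing G) :=
  letI : DecidablePred (· ∈ fracCone G) := fun _ => Classical.dec _
  LinearOrder.mkOfAddGroupCone (fracCone G)

lemma fracLOF_strict : letI := fracLOF G; IsStrictOrderedRing (FractionRing G) :=
  letI := fracLOF G
  haveI : IsOrderedRing (FractionRing G) := IsOrderedRing.mkOfCone (fracCone G)
  IsOrderedRing.toIsStrictOrderedRing _

end FracField

/-- Any nontrivial naturally totally ordered cancellative commutative semiring
embeds, order-faithfully, in a linearly ordered field. -/
theorem natTotOrd_cancellative_embeds_linearOrderedField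
    (K : Type) [CommSemiring K] [Nontrivial K]
    (hnat : natTotOrd K) (hadd : addCanc K) (hmul : mulCanc K) :
    ∃ (F : Type) (_ : Field F) (_ : LinearOrder F) (_ : IsStrictOrderedRing F) (f : K →+* F),
      Function.Injective f ∧ ∀ a b : K, (∃ c, a + c = b) ↔ f a ≤ f b := by
  haveI : Nontrivial (Diff hadd) := diff_nontrivial
  haveI : NoZeroDivisors (Diff hadd) := ⟨fun {x y} h => diff_noZeroDivisors hnat hmul x y h⟩
  haveI : IsDomain (Diff hadd) := NoZeroDivisors.to_isDomain _
  haveI := diffCone_max (hadd := hadd) hnat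
  letI : LinearOrder (Diff hadd) :=
    letI : DecidablePred (· ∈ diffCone (hadd := hadd) hnat) := fun _ => Classical.dec _
    LinearOrder.mkOfAddGroupCone (diffCone (hadd := hadd) hnat)
  haveI : IsOrderedRing (Diff hadd) := IsOrderedRing.mkOfCone (diffCone (hadd := hadd) hnat)
  haveI : IsStrictOrderedRing (Diff hadd) := IsOrderedRing.toIsStrictOrderedRing _
  letI LF : LinearOrder (FractionRing (Diff hadd)) := fracLOF (Diff hadd)
  haveI LS : IsStrictOrderedRing (FractionRing (Diff hadd)) := fracLOF_strict (Diff hadd)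
  set A := algebraMap (Diff hadd) (FractionRing (Diff hadd)) with hA
  refine ⟨FractionRing (Diff hadd), inferInstance, LF, LS, A.comp (iK hadd), ?_, ?_⟩
  · exact (IsFractionRing.injective _ _).comp iK_inj
  · have hGle : ∀ x y : Diff hadd, x ≤ y ↔ y - x ∈ diffCone (hadd := hadd) hnat :=
      fun _ _ => Iff.rfl
    have hFle : ∀ x y : FractionRing (Diff hadd), x ≤ y ↔ y - x ∈ fracCone (Diff hadd) :=
      fun _ _ => Iff.rfl
    have key : ∀ g : Diff hadd, 0 ≤ g ↔ (0 : FractionRing (Diff hadd)) ≤ A g := by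
      intro g
      constructor
      · intro hg
        rw [hFle]
        exact ⟨g, 1, by simpa using hg, zero_lt_one, by simp [hA]⟩
      · intro hg
        obtain ⟨a, b, ha, hb, he⟩ := (hFle 0 (A g)).mp hg
        rw [sub_zero] at he
        have hgb : g * b = a := by
          apply IsFractionRing.injective (Diff hadd) (FractionRing (Diff hadd))
          rw [map_mul]; exact he
        by_contra hg0
        push_neg at hg0
        have : g * b < 0 := mul_neg_of_neg_of_pos hg0 hb
        rw [hgb] at this
        exact absurd ha (not_le.mpr this)
    intro a b
    have step1 : (∃ c, a + c = b) ↔ iK hadd a ≤ iK hadd b := by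
      rw [hGle]
      constructor
      · rintro ⟨c, rfl⟩
        exact ⟨c, by rw [map_add]; ring⟩
      · rintro ⟨c, hc⟩
        refine ⟨c, iK_inj (hadd := hadd) ?_⟩
        rw [map_add, hc]; ring
    have step2 : iK hadd a ≤ iK hadd b ↔ A.comp (iK hadd) a ≤ A.comp (iK hadd) b := by
      rw [← sub_nonneg, ← sub_nonneg (a := A.comp (iK hadd) b)]
      simp only [RingHom.comp_apply]
      rw [← map_sub A]
      exact key _
    rw [step1, step2]
end

section
/- Let K be a nontrivial commutative semiring, W ⊆ V finite variable sets with finite nonempty domains, and R, R', R'' three K-relations over V. Then: (1) R ≡ R' implies R[W] ≡ R'[W]; and (2) if K has no zero divisors, then R ≡ R' and R' ≡ R'' imply R ≡ R''. -/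
/-! # Preliminaries: K-relations over semirings -/

open Finset

variable {V : Type*}

theorem mul_margin {K : Type*} [CommSemiring K] [DecidableEq V] {Dom : V → Type*}
    [∀ a, Fintype (Dom a)] {X Y : Finset V} (c : K) (R : Tup Dom X → K) (h : Y ⊆ X)
    (u : Tup Dom Y) : c * margin R h u = margin (fun t => c * R t) h u := by
  simp only [margin, mul_sum, mul_ite, mul_zero]

theorem noZD.noZeroDivisors {K : Type*} [CommSemiring K] (hK : noZD K) : NoZeroDivisors K :=
  ⟨fun h => hK _ _ h⟩

namespace equivRel

variable {K : Type*} [CommSemiring K] {Dom : V → Type*} {X : Finset V}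

theorem margin [DecidableEq V] [∀ a, Fintype (Dom a)] {R R' : Tup Dom X → K}
    (hR : equivRel R R') {Y : Finset V} (h : Y ⊆ X) :
    equivRel (_root_.margin R h) (_root_.margin R' h) := by
  obtain ⟨a, b, ha, hb, hab⟩ := hR
  refine ⟨a, b, ha, hb, fun u => ?_⟩
  simp only [mul_margin, hab]

theorem trans [NoZeroDivisors K] {R R' R'' : Tup Dom X → K}
    (hR : equivRel R R') (hR' : equivRel R' R'') : equivRel R R'' := by
  obtain ⟨a, b, ha, hb, hab⟩ := hR
  obtain ⟨c, d, hc, hd, hcd⟩ := hR'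
  refine ⟨a * c, b * d, mul_ne_zero ha hc, mul_ne_zero hb hd, fun t => ?_⟩
  calc a * c * R t = c * (a * R t) := by ring
    _ = b * (c * R' t) := by rw [hab t]; ring
    _ = b * d * R'' t := by rw [hcd t]; ring

end equivRel

theorem equivRel_margin_and_trans_general
    [DecidableEq V] {Dom : V → Type*} [∀ a, Fintype (Dom a)]
    {K : Type*} [CommSemiring K]
    {S W : Finset V} (hWS : W ⊆ S) (R R' R'' : Tup Dom S → K) :
    (equivRel R R' → equivRel (margin R hWS) (margin R' hWS)) ∧
      (noZD K → equivRel R R' → equivRel R' R'' → equivRel R R'') := by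
  refine ⟨fun hR => hR.margin hWS, fun hK hR hR' => ?_⟩
  have := hK.noZeroDivisors
  exact hR.trans hR'

/-- Equivalence of `K`-relations is preserved by marginals; and if `K` has no
zero divisors, equivalence is transitive. -/
theorem equivRel_margin_and_trans
    [DecidableEq V] {Dom : V → Type*} [∀ a, Fintype (Dom a)] [∀ a, Nonempty (Dom a)]
    {K : Type*} [CommSemiring K] [Nontrivial K]
    {S W : Finset V} (hWS : W ⊆ S) (R R' R'' : Tup Dom S → K) :
    (equivRel R R' → equivRel (margin R hWS) (margin R' hWS)) ∧
      (noZD K → equivRel R R' → equivRel R' R'' → equivRel R R'') :=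
  equivRel_margin_and_trans_general hWS R R' R''
end

section
/- Let K be a nontrivial positive commutative semiring, X, Y, Z pairwise disjoint finite sets of variables with finite nonempty domains, and R a K-relation over X∪Y∪Z with nonempty support. If R satisfies the conditional independence CI(X; Y, Z), then the decomposition of R along X∪Y and X∪Z is a lossless-join decomposition: R[X∪Y] ⋈ R[X∪Z] ≡ R. -/
/-! # Preliminaries: K-relations over semirings -/

open Finset

variable {V : Type*}

section MyAux

variable [DecidableEq V] {Dom : V → Type*} [∀ a, Fintype (Dom a)]
  {K : Type*} [CommSemiring K]

theorem myAux_sum_eq_zero (hp : plusPos K) {ι : Type*} (s : Finset ι) (f : ι → K) :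
    ∑ i ∈ s, f i = 0 → ∀ i ∈ s, f i = 0 := by
  classical
  induction s using Finset.induction_on with
  | empty => simp
  | insert _ _ ha ih =>
    rw [Finset.sum_insert ha]
    intro h i hi
    obtain ⟨h1, h2⟩ := hp _ _ h
    rcases Finset.mem_insert.mp hi with rfl | hi
    · exact h1
    · exact ih h2 i hi

theorem myAux_margin_zero (hp : plusPos K) {X Y : Finset V}
    (R : Tup Dom X → K) (h : Y ⊆ X) (t : Tup Dom X)
    (hm : margin R h (Tup.restrict h t) = 0) : R t = 0 := by
  unfold margin at hm
  have := myAux_sum_eq_zero hp _ _ hm t (Finset.mem_univ t)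
  simpa using this

theorem myAux_margin_self {X : Finset V} (R : Tup Dom X → K) (h : X ⊆ X)
    (t : Tup Dom X) : margin R h t = R t := by
  unfold margin
  rw [Finset.sum_eq_single_of_mem t (Finset.mem_univ t)
    (fun b _ hb => if_neg (fun he : Tup.restrict h b = t => hb he))]
  exact if_pos rfl

open Classical in
theorem myAux_margin_margin {X Y Z : Finset V} (R : Tup Dom X → K)
    (h1 : Y ⊆ X) (h2 : Z ⊆ Y) (u : Tup Dom Z) :
    margin (margin R h1) h2 u = margin R (h2.trans h1) u := by
  unfold margin
  have step1 : ∀ s : Tup Dom Y,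
      (if Tup.restrict h2 s = u then
        (∑ t : Tup Dom X, if Tup.restrict h1 t = s then R t else 0) else 0)
      = ∑ t : Tup Dom X,
          if Tup.restrict h1 t = s then (if Tup.restrict h2 s = u then R t else 0)
          else 0 := by
    intro s
    split
    · rename_i hs; simp [hs]
    · rename_i hs; simp [hs]
  simp only [step1]
  rw [Finset.sum_comm]
  refine Finset.sum_congr rfl fun t _ => ?_
  rw [Finset.sum_eq_single_of_mem (Tup.restrict h1 t) (Finset.mem_univ _)
    (fun b _ hb => if_neg fun h => hb h.symm)]
  rw [if_pos rfl]
  rfl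

theorem myAux_margin_congr {W X₁ X₂ : Finset V} (e : X₁ = X₂) (R : Tup Dom W → K)
    (h1 : X₁ ⊆ W) (h2 : X₂ ⊆ W) (t : Tup Dom W) :
    margin R h1 (Tup.restrict h1 t) = margin R h2 (Tup.restrict h2 t) := by
  subst e; rfl

open Classical in
theorem myAux_cfun_mul {Y Z : Finset V} (S : Tup Dom Y → K) (h : Z ⊆ Y)
    (u : Tup Dom Z) (hu : margin S h u ≠ 0) :
    margin S h u * cfun S h u
      = ∏ v : Tup Dom Z, if margin S h v ≠ 0 then margin S h v else 1 := by
  unfold cfun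
  rw [← Finset.mul_prod_erase Finset.univ
        (fun v => if margin S h v ≠ 0 then margin S h v else 1) (Finset.mem_univ u),
      ← Finset.mul_prod_erase Finset.univ
        (fun v => if margin S h v ≠ 0 ∧ v ≠ u then margin S h v else 1)
        (Finset.mem_univ u)]
  rw [if_pos hu, if_neg (by simp)]
  rw [one_mul]
  congr 1
  refine Finset.prod_congr rfl fun v hv => ?_
  have hvu : v ≠ u := (Finset.mem_erase.mp hv).1
  simp [hvu]

end MyAux

/-- Over a positive semiring, conditional independence `CI(X; Y, Z)` entails that
the decomposition along `X ∪ Y` and `X ∪ Z` is a lossless-join one. -/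
theorem ci_implies_losslessJoin
    [DecidableEq V] {Dom : V → Type*} [∀ a, Fintype (Dom a)] [∀ a, Nonempty (Dom a)]
    {K : Type*} [CommSemiring K] [Nontrivial K] (hpos : posSemiring K)
    {X Y Z : Finset V} (hXY : Disjoint X Y) (hXZ : Disjoint X Z) (hYZ : Disjoint Y Z)
    (R : Tup Dom (X ∪ Y ∪ Z) → K) (hsupp : ∃ t, R t ≠ 0)
    (hci : satCI R (subL (X := X) (Y := Y) (Z := Z)) subM subR) :
    equivRel
      (joinOn (margin R (subXY (X := X) (Y := Y) (Z := Z))) (margin R subXZ)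
        subXY subXZ unionSplit) R := by
  classical
  obtain ⟨hplus, hzd⟩ := hpos
  haveI : NoZeroDivisors K := ⟨fun {a b} hab => hzd a b hab⟩
  have h₂ : (X ∪ Y) ∩ (X ∪ Z) ⊆ X ∪ Z := Finset.inter_subset_right
  have hI : (X ∪ Y) ∩ (X ∪ Z) ⊆ X ∪ Y ∪ Z := h₂.trans subXZ
  have eX : X = (X ∪ Y) ∩ (X ∪ Z) := by
    ext a
    simp only [Finset.mem_inter, Finset.mem_union]
    constructor
    · intro h; exact ⟨Or.inl h, Or.inl h⟩
    · rintro ⟨hy | hy, hz | hz⟩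
      · exact hy
      · exact hy
      · exact hz
      · exact absurd hz (Finset.disjoint_left.mp hYZ hy)
  -- marginal on the intersection
  have hMm : ∀ u, margin (margin R subXZ) h₂ u = margin R hI u :=
    fun u => myAux_margin_margin R subXZ h₂ u
  refine ⟨1, ∏ v : Tup Dom ((X ∪ Y) ∩ (X ∪ Z)),
      if margin (margin R subXZ) h₂ v ≠ 0 then margin (margin R subXZ) h₂ v else 1,
    one_ne_zero, ?_, ?_⟩
  · rw [Finset.prod_ne_zero_iff]
    intro v _
    split
    · assumption
    · exact one_ne_zero
  intro t
  rw [one_mul]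
  have hkey := hci t
  rw [myAux_margin_self] at hkey
  have hkey' : margin R subXY (Tup.restrict subXY t) *
      margin R subXZ (Tup.restrict subXZ t)
      = R t * margin R subL (Tup.restrict subL t) := hkey
  show margin R subXY (Tup.restrict subXY t) * margin R subXZ (Tup.restrict subXZ t)
      * cfun (margin R subXZ) h₂ (Tup.restrict hI t) = _ * R t
  by_cases hMz : margin (margin R subXZ) h₂ (Tup.restrict hI t) = 0
  · have hR2 : margin R subXZ (Tup.restrict subXZ t) = 0 :=
      myAux_margin_zero hplus (margin R subXZ) h₂ (Tup.restrict subXZ t) hMz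
    have hRt : R t = 0 := myAux_margin_zero hplus R hI t (by rw [← hMm]; exact hMz)
    rw [hR2, hRt, mul_zero, zero_mul, mul_zero]
  · have hD : margin R subL (Tup.restrict subL t)
        = margin (margin R subXZ) h₂ (Tup.restrict hI t) := by
      rw [hMm]
      exact myAux_margin_congr eX R subL hI t
    rw [hkey', hD, mul_assoc, myAux_cfun_mul (margin R subXZ) h₂ _ hMz, mul_comm]
end

section
/- The Triviality, Symmetry, and Decomposition rules are sound for K-relations over any nontrivial commutative semiring K: for every K-relation R over a finite schema V with finite nonempty domains and pairwise disjoint X, Y, Z, W ⊆ V, (i) R satisfies CI(X; Y, ∅); (ii) if R satisfies CI(X; Y, Z) then R satisfies CI(X; Z, Y); and (iii) if R satisfies CI(X; Y, Z∪W) then R satisfies CI(X; Y, Z). -/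
/-! # Preliminaries: K-relations over semirings -/

open Finset

variable {V : Type*}

/-! Triviality and Symmetry only rename the schemas of the marginals involved. For
Decomposition, both sides of `CI(X; Y, Z)` at a tuple `t` over `XYZ` are sums over the
extensions `s` of `t` to `XYZW` of the two sides of `CI(X; Y, Z ∪ W)` at `s`: for the joint
marginal this is the tower property of marginals, and for the marginal on `XZ` it holds
because `s ↦ s[XZW]` is a bijection from these extensions onto the extensions of `t[XZ]`
to `XZW`, as `Y` and `W` are disjoint. -/

section Marginals

open Classical

variable {K : Type*} [CommSemiring K] [DecidableEq V] {Dom : V → Type*}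
  [∀ a, Fintype (Dom a)]

theorem margin_congr_of_eq {S A B : Finset V} (R : Tup Dom S → K) (hA : A ⊆ S) (hB : B ⊆ S)
    (hAB : A = B) (u : Tup Dom A) (v : Tup Dom B)
    (huv : ∀ a (ha : a ∈ A) (hb : a ∈ B), u ⟨a, ha⟩ = v ⟨a, hb⟩) :
    margin R hA u = margin R hB v := by
  subst hAB
  obtain rfl : u = v := funext fun a => huv a.1 a.2 a.2
  rfl

theorem margin_congr_fiber {S T : Finset V} {f g : Tup Dom S → K} (hT : T ⊆ S)
    (t : Tup Dom T) (hfg : ∀ s, Tup.restrict hT s = t → f s = g s) :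
    margin f hT t = margin g hT t :=
  Finset.sum_congr rfl fun s _ => by
    split_ifs with hs
    · exact hfg s hs
    · rfl

theorem margin_const_mul {S T : Finset V} (c : K) (f : Tup Dom S → K) (hT : T ⊆ S)
    (t : Tup Dom T) : margin (fun s => c * f s) hT t = c * margin f hT t := by
  simp only [margin, Finset.mul_sum, mul_ite, mul_zero]

theorem margin_mul_const {S T : Finset V} (f : Tup Dom S → K) (c : K) (hT : T ⊆ S)
    (t : Tup Dom T) : margin (fun s => f s * c) hT t = margin f hT t * c := by
  simp only [margin, Finset.sum_mul, ite_mul, zero_mul]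

theorem margin_margin {S T U : Finset V} (R : Tup Dom S → K) (hT : T ⊆ S) (hU : U ⊆ T)
    (u : Tup Dom U) : margin (margin R hT) hU u = margin R (hU.trans hT) u := by
  unfold margin
  simp_rw [Finset.ite_sum_zero, ← ite_and]
  rw [Finset.sum_comm]
  refine Finset.sum_congr rfl fun r _ => ?_
  simp_rw [and_comm, ite_and, Finset.sum_ite_eq, Finset.mem_univ, if_true]
  rfl

/-- The extensions of `t` to `S` are glued from `t` and the extensions of `t[T ∩ C]` to `C`. -/
theorem margin_comp_restrict {S T C D : Finset V} (f : Tup Dom C → K) (hT : T ⊆ S)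
    (hC : C ⊆ S) (hS : S ⊆ T ∪ C) (hDT : D ⊆ T) (hDC : D ⊆ C) (hTC : T ∩ C ⊆ D)
    (t : Tup Dom T) :
    margin (fun s => f (Tup.restrict hC s)) hT t = margin f hDC (Tup.restrict hDT t) := by
  unfold margin
  rw [← Finset.sum_filter, ← Finset.sum_filter]
  let glue (v : Tup Dom C) : Tup Dom S := fun a =>
    if h : a.1 ∈ T then t ⟨a.1, h⟩ else v ⟨a.1, (Finset.mem_union.1 (hS a.2)).resolve_left h⟩
  refine Finset.sum_nbij' (Tup.restrict hC) glue ?_ ?_ ?_ ?_ fun _ _ => rfl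
  · intro s hs
    simp only [Finset.mem_filter, Finset.mem_univ, true_and] at hs ⊢
    subst hs
    rfl
  · intro v _
    simp only [Finset.mem_filter, Finset.mem_univ, true_and]
    funext a
    exact dif_pos a.2
  · intro s hs
    simp only [Finset.mem_filter, Finset.mem_univ, true_and] at hs
    subst hs
    funext a
    by_cases h : a.1 ∈ T
    · exact dif_pos h
    · exact dif_neg h
  · intro v hv
    simp only [Finset.mem_filter, Finset.mem_univ, true_and] at hv
    funext a
    by_cases h : a.1 ∈ T
    · have haD : a.1 ∈ D := hTC (Finset.mem_inter.2 ⟨h, a.2⟩)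
      exact (dif_pos h).trans (congrFun hv ⟨a.1, haD⟩).symm
    · exact dif_neg h

theorem satCI_empty {S X Y : Finset V} (R : Tup Dom S → K) (hX : X ⊆ S) (hY : Y ⊆ S)
    (hE : (∅ : Finset V) ⊆ S) : satCI R hX hY hE := by
  intro t
  rw [margin_congr_of_eq R _ (Finset.union_subset hX hY) (Finset.union_empty _) t
      (Tup.restrict Finset.subset_union_left t) fun _ _ _ => rfl,
    margin_congr_of_eq R _ hX (Finset.union_empty X) _
      (Tup.restrict (Finset.subset_union_left.trans Finset.subset_union_left) t)
      fun _ _ _ => rfl]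

theorem satCI.symm {S X Y Z : Finset V} {R : Tup Dom S → K}
    {hX : X ⊆ S} {hY : Y ⊆ S} {hZ : Z ⊆ S}
    (h : satCI R hX hY hZ) : satCI R hX hZ hY := by
  intro t
  have ht := h fun a => t ⟨a.1, (Finset.union_right_comm X Y Z).subset a.2⟩
  rw [margin_congr_of_eq R _ (Finset.union_subset (Finset.union_subset hX hZ) hY)
    (Finset.union_right_comm X Y Z) _ t fun _ _ _ => rfl] at ht
  rw [mul_comm]
  exact ht

theorem satCI.of_union_right {S X Y Z W : Finset V} {R : Tup Dom S → K}
    {hX : X ⊆ S} {hY : Y ⊆ S} {hZ : Z ⊆ S} {hW : W ⊆ S} (hYW : Disjoint Y W)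
    (h : satCI R hX hY (Finset.union_subset hZ hW)) : satCI R hX hY hZ := by
  intro t
  have hT : X ∪ Y ∪ Z ⊆ X ∪ Y ∪ (Z ∪ W) := by
    intro a; simp only [Finset.mem_union]; tauto
  have hC : X ∪ (Z ∪ W) ⊆ X ∪ Y ∪ (Z ∪ W) := by
    intro a; simp only [Finset.mem_union]; tauto
  have hS : X ∪ Y ∪ (Z ∪ W) ⊆ S :=
    Finset.union_subset (Finset.union_subset hX hY) (Finset.union_subset hZ hW)
  have hTC : (X ∪ Y ∪ Z) ∩ (X ∪ (Z ∪ W)) ⊆ X ∪ Z := by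
    intro a ha
    have hYW' : a ∈ Y → a ∉ W := fun hY => Finset.disjoint_left.1 hYW hY
    simp only [Finset.mem_inter, Finset.mem_union] at ha hYW' ⊢
    tauto
  have joint : margin R (Finset.union_subset (Finset.union_subset hX hY) hZ) t
      = margin (margin R hS) hT t := (margin_margin R hS hT t).symm
  have onXZ : margin R (Finset.union_subset hX hZ) (Tup.restrict subXZ t)
      = margin (fun s => margin R (hC.trans hS) (Tup.restrict hC s)) hT t := by
    rw [margin_comp_restrict _ hT hC
      (by intro a; simp only [Finset.mem_union]; tauto) subXZ
      (by intro a; simp only [Finset.mem_union]; tauto) hTC, margin_margin]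
  rw [joint, onXZ, ← margin_const_mul, ← margin_mul_const]
  refine margin_congr_fiber hT t fun s hs => ?_
  subst hs
  exact h s

end Marginals

theorem triviality_symmetry_decomposition_sound_general
    [DecidableEq V] [Fintype V] {Dom : V → Type*}
    [∀ a, Fintype (Dom a)]
    {K : Type*} [CommSemiring K]
    {X Y Z W : Finset V}
    (hYW : Disjoint Y W)
    (R : Tup Dom (Finset.univ : Finset V) → K) :
    satCI R (Finset.subset_univ X) (Finset.subset_univ Y)
        (Finset.subset_univ (∅ : Finset V)) ∧
      (satCI R (Finset.subset_univ X) (Finset.subset_univ Y) (Finset.subset_univ Z) →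
        satCI R (Finset.subset_univ X) (Finset.subset_univ Z) (Finset.subset_univ Y)) ∧
      (satCI R (Finset.subset_univ X) (Finset.subset_univ Y)
          (Finset.subset_univ (Z ∪ W)) →
        satCI R (Finset.subset_univ X) (Finset.subset_univ Y)
          (Finset.subset_univ Z)) :=
  ⟨satCI_empty R _ _ _, satCI.symm, satCI.of_union_right (hW := Finset.subset_univ W) hYW⟩

/-- Triviality, Symmetry, and Decomposition are sound for `K`-relations over any
nontrivial commutative semiring. -/
theorem triviality_symmetry_decomposition_sound
    [DecidableEq V] [Fintype V] {Dom : V → Type*}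
    [∀ a, Fintype (Dom a)] [∀ a, Nonempty (Dom a)]
    {K : Type*} [CommSemiring K] [Nontrivial K]
    {X Y Z W : Finset V}
    (hXY : Disjoint X Y) (hXZ : Disjoint X Z) (hXW : Disjoint X W)
    (hYZ : Disjoint Y Z) (hYW : Disjoint Y W) (hZW : Disjoint Z W)
    (R : Tup Dom (Finset.univ : Finset V) → K) :
    satCI R (Finset.subset_univ X) (Finset.subset_univ Y)
        (Finset.subset_univ (∅ : Finset V)) ∧
      (satCI R (Finset.subset_univ X) (Finset.subset_univ Y) (Finset.subset_univ Z) →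
        satCI R (Finset.subset_univ X) (Finset.subset_univ Z) (Finset.subset_univ Y)) ∧
      (satCI R (Finset.subset_univ X) (Finset.subset_univ Y)
          (Finset.subset_univ (Z ∪ W)) →
        satCI R (Finset.subset_univ X) (Finset.subset_univ Y)
          (Finset.subset_univ Z)) :=
  triviality_symmetry_decomposition_sound_general hYW R
end

section
/- The Weak union rule is sound for K-relations over any nontrivial positive and multiplicatively cancellative commutative semiring K: for every K-relation R over a finite schema V with finite nonempty domains and pairwise disjoint X, Y, Z, W ⊆ V, if R satisfies CI(X; Y, Z∪W), then R satisfies CI(X∪Z; Y, W). -/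
/-! # Preliminaries: K-relations over semirings -/

open Finset

variable {V : Type*}

section Helpers

variable {K : Type*} [CommSemiring K] [DecidableEq V] {Dom : V → Type*}
  [∀ a, Fintype (Dom a)]

lemma WU.sum_zero (hp : plusPos K) {ι : Type*} {s : Finset ι} {f : ι → K}
    (h : ∑ i ∈ s, f i = 0) : ∀ i ∈ s, f i = 0 := by
  classical
  intro i hi
  have h2 := Finset.add_sum_erase s f hi
  exact (hp _ _ (h2.trans h)).1

lemma WU.margin_congr {S A B U : Finset V} (R : Tup Dom S → K) (e : A = B)
    (hA : A ⊆ S) (hB : B ⊆ S) (hAU : A ⊆ U) (hBU : B ⊆ U) (t : Tup Dom U) :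
    margin R hA (Tup.restrict hAU t) = margin R hB (Tup.restrict hBU t) := by
  subst e; rfl

lemma WU.margin_zero_mono [Fintype V] (hp : plusPos K) {A B U : Finset V}
    (hAB : A ⊆ B) (R : Tup Dom (Finset.univ : Finset V) → K)
    (hBU : B ⊆ U) (t : Tup Dom U)
    (hz : margin R (Finset.subset_univ A) (Tup.restrict (hAB.trans hBU) t) = 0) :
    margin R (Finset.subset_univ B) (Tup.restrict hBU t) = 0 := by
  simp only [margin] at hz ⊢
  apply Finset.sum_eq_zero
  intro r _
  split_ifs with hr
  · have hkey := WU.sum_zero hp hz r (Finset.mem_univ r)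
    have hcond : Tup.restrict (Finset.subset_univ A) r = Tup.restrict (hAB.trans hBU) t :=
      congrArg (Tup.restrict hAB) hr
    rwa [if_pos hcond] at hkey
  · rfl

open Classical in
lemma WU.glue [Fintype V] {U A B C : Finset V}
    (hA : A ⊆ U) (hB : B ⊆ U) (hcov : U ⊆ A ∪ B)
    (hCA : C ⊆ A) (hCB : C ⊆ B) (hABC : ∀ a ∈ A, a ∈ B → a ∈ C)
    (R : Tup Dom (Finset.univ : Finset V) → K) (t : Tup Dom U) :
    (∑ s : Tup Dom U, if Tup.restrict hA s = Tup.restrict hA t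
        then margin R (Finset.subset_univ B) (Tup.restrict hB s) else 0)
    = margin R (Finset.subset_univ C) (Tup.restrict (hCA.trans hA) t) := by
  simp only [margin]
  have step1 : ∀ s : Tup Dom U,
      (if Tup.restrict hA s = Tup.restrict hA t
        then (∑ r : Tup Dom (Finset.univ : Finset V),
          if Tup.restrict (Finset.subset_univ B) r = Tup.restrict hB s then R r else 0) else 0)
      = ∑ r : Tup Dom (Finset.univ : Finset V),
          if Tup.restrict hA s = Tup.restrict hA t ∧
              Tup.restrict (Finset.subset_univ B) r = Tup.restrict hB s then R r else 0 := by
    intro s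
    split_ifs with hs
    · exact Finset.sum_congr rfl fun r _ => by simp [hs]
    · exact (Finset.sum_eq_zero fun r _ => by simp [hs]).symm
  calc (∑ s : Tup Dom U, if Tup.restrict hA s = Tup.restrict hA t
        then (∑ r : Tup Dom (Finset.univ : Finset V),
          if Tup.restrict (Finset.subset_univ B) r = Tup.restrict hB s then R r else 0) else 0)
      = ∑ s : Tup Dom U, ∑ r : Tup Dom (Finset.univ : Finset V),
          if Tup.restrict hA s = Tup.restrict hA t ∧
              Tup.restrict (Finset.subset_univ B) r = Tup.restrict hB s then R r else 0 :=
        Finset.sum_congr rfl fun s _ => step1 s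
    _ = ∑ r : Tup Dom (Finset.univ : Finset V), ∑ s : Tup Dom U,
          if Tup.restrict hA s = Tup.restrict hA t ∧
              Tup.restrict (Finset.subset_univ B) r = Tup.restrict hB s then R r else 0 :=
        Finset.sum_comm
    _ = ∑ r : Tup Dom (Finset.univ : Finset V),
          if Tup.restrict (Finset.subset_univ C) r = Tup.restrict (hCA.trans hA) t
            then R r else 0 := by
        apply Finset.sum_congr rfl
        intro r _
        by_cases hc : Tup.restrict (Finset.subset_univ C) r = Tup.restrict (hCA.trans hA) t
        · rw [if_pos hc]
          have huniq : ∀ s : Tup Dom U,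
              (Tup.restrict hA s = Tup.restrict hA t ∧
                Tup.restrict (Finset.subset_univ B) r = Tup.restrict hB s) ↔
              s = fun a => if h' : a.1 ∈ A then t a else r ⟨a.1, Finset.mem_univ _⟩ := by
            intro s
            constructor
            · rintro ⟨h1, h2⟩
              funext a
              by_cases ha : a.1 ∈ A
              · have := congrFun h1 ⟨a.1, ha⟩
                simpa [ha, Tup.restrict] using this
              · have hb : a.1 ∈ B := (Finset.mem_union.mp (hcov a.2)).resolve_left ha
                have := congrFun h2 ⟨a.1, hb⟩
                simpa [ha, Tup.restrict] using this.symm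
            · rintro rfl
              constructor
              · funext a
                have ha : a.1 ∈ A := a.2
                show (if h' : a.1 ∈ A then t ⟨a.1, hA ha⟩ else _) = t ⟨a.1, hA ha⟩
                rw [dif_pos ha]
              · funext a
                have hb : a.1 ∈ B := a.2
                show r ⟨a.1, Finset.mem_univ _⟩ =
                  (if h' : a.1 ∈ A then t ⟨a.1, hB hb⟩ else r ⟨a.1, Finset.mem_univ _⟩)
                by_cases ha : a.1 ∈ A
                · rw [dif_pos ha]
                  exact congrFun hc ⟨a.1, hABC a.1 ha hb⟩
                · rw [dif_neg ha]
          calc (∑ s : Tup Dom U,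
                if Tup.restrict hA s = Tup.restrict hA t ∧
                    Tup.restrict (Finset.subset_univ B) r = Tup.restrict hB s then R r else 0)
              = ∑ s : Tup Dom U,
                if s = (fun a => if h' : a.1 ∈ A then t a else r ⟨a.1, Finset.mem_univ _⟩)
                  then R r else 0 :=
                Finset.sum_congr rfl fun s _ => if_congr (huniq s) rfl rfl
            _ = R r := by rw [Finset.sum_ite_eq' Finset.univ _ (fun _ => R r),
                  if_pos (Finset.mem_univ _)]
        · rw [if_neg hc]
          apply Finset.sum_eq_zero
          intro s _
          rw [if_neg]
          rintro ⟨h1, h2⟩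
          apply hc
          funext a
          have e2 := congrFun h2 ⟨a.1, hCB a.2⟩
          have e1 := congrFun h1 ⟨a.1, hCA a.2⟩
          exact e2.trans e1

end Helpers

/-- Weak union is sound for `K`-relations over any nontrivial positive,
multiplicatively cancellative commutative semiring. -/
theorem weakUnion_sound
    [DecidableEq V] [Fintype V] {Dom : V → Type*}
    [∀ a, Fintype (Dom a)] [∀ a, Nonempty (Dom a)]
    {K : Type*} [CommSemiring K] [Nontrivial K]
    (hpos : posSemiring K) (hmc : mulCanc K)
    {X Y Z W : Finset V}
    (hXY : Disjoint X Y) (hXZ : Disjoint X Z) (hXW : Disjoint X W)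
    (hYZ : Disjoint Y Z) (hYW : Disjoint Y W) (hZW : Disjoint Z W)
    (R : Tup Dom (Finset.univ : Finset V) → K)
    (h : satCI R (Finset.subset_univ X) (Finset.subset_univ Y)
      (Finset.subset_univ (Z ∪ W))) :
    satCI R (Finset.subset_univ (X ∪ Z)) (Finset.subset_univ Y)
      (Finset.subset_univ W) := by
  classical
  intro t
  -- ambient schema of t
  have hXU : X ⊆ X ∪ Z ∪ Y ∪ W := by
    intro a ha; simp only [Finset.mem_union]; tauto
  have hXYU : X ∪ Y ⊆ X ∪ Z ∪ Y ∪ W := by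
    intro a ha; simp only [Finset.mem_union] at ha ⊢; tauto
  have hXZU : X ∪ Z ⊆ X ∪ Z ∪ Y ∪ W := by
    intro a ha; simp only [Finset.mem_union] at ha ⊢; tauto
  have hGU : X ∪ Z ∪ Y ⊆ X ∪ Z ∪ Y ∪ W := Finset.subset_union_left
  have hBU : X ∪ Z ∪ W ⊆ X ∪ Z ∪ Y ∪ W := by
    intro a ha; simp only [Finset.mem_union] at ha ⊢; tauto
  have hUU : X ∪ Z ∪ Y ∪ W ⊆ X ∪ Z ∪ Y ∪ W := Finset.Subset.refl _
  have hE : X ∪ Y ∪ (Z ∪ W) ⊆ X ∪ Z ∪ Y ∪ W := by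
    intro a ha; simp only [Finset.mem_union] at ha ⊢; tauto
  have hXZWU : X ∪ (Z ∪ W) ⊆ X ∪ Z ∪ Y ∪ W := by
    intro a ha; simp only [Finset.mem_union] at ha ⊢; tauto
  -- the CI hypothesis, re-expressed over the ambient schema
  have h'' : ∀ s' : Tup Dom (X ∪ Z ∪ Y ∪ W),
      margin R (Finset.subset_univ (X ∪ Y)) (Tup.restrict hXYU s') *
        margin R (Finset.subset_univ (X ∪ Z ∪ W)) (Tup.restrict hBU s') =
      margin R (Finset.subset_univ (X ∪ Z ∪ Y ∪ W)) (Tup.restrict hUU s') *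
        margin R (Finset.subset_univ X) (Tup.restrict hXU s') := by
    intro s'
    have H := h (Tup.restrict hE s')
    have c2 : margin R (Finset.subset_univ (X ∪ (Z ∪ W))) (Tup.restrict hXZWU s') =
        margin R (Finset.subset_univ (X ∪ Z ∪ W)) (Tup.restrict hBU s') :=
      WU.margin_congr R (by ext a; simp only [Finset.mem_union]; tauto) _ _ _ _ s'
    have c3 : margin R (Finset.subset_univ (X ∪ Y ∪ (Z ∪ W))) (Tup.restrict hE s') =
        margin R (Finset.subset_univ (X ∪ Z ∪ Y ∪ W)) (Tup.restrict hUU s') :=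
      WU.margin_congr R (by ext a; simp only [Finset.mem_union]; tauto) _ _ _ _ s'
    rw [← c2, ← c3]
    exact H
  -- constancy of the X∪Y- and X-margins on the fiber over X∪Z∪Y
  have hsubq : X ∪ Y ⊆ X ∪ Z ∪ Y := by
    intro a ha; simp only [Finset.mem_union] at ha ⊢; tauto
  have hsubp : X ⊆ X ∪ Z ∪ Y := by
    intro a ha; simp only [Finset.mem_union]; tauto
  have hconstq : ∀ s' : Tup Dom (X ∪ Z ∪ Y ∪ W),
      Tup.restrict hGU s' = Tup.restrict hGU t →
      Tup.restrict hXYU s' = Tup.restrict hXYU t :=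
    fun s' hc => congrArg (Tup.restrict hsubq) hc
  have hconstp : ∀ s' : Tup Dom (X ∪ Z ∪ Y ∪ W),
      Tup.restrict hGU s' = Tup.restrict hGU t →
      Tup.restrict hXU s' = Tup.restrict hXU t :=
    fun s' hc => congrArg (Tup.restrict hsubp) hc
  -- summing the hypothesis over the fiber
  have hsum : (∑ s' : Tup Dom (X ∪ Z ∪ Y ∪ W),
      if Tup.restrict hGU s' = Tup.restrict hGU t then
        margin R (Finset.subset_univ (X ∪ Y)) (Tup.restrict hXYU s') *
          margin R (Finset.subset_univ (X ∪ Z ∪ W)) (Tup.restrict hBU s') else 0)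
      = ∑ s' : Tup Dom (X ∪ Z ∪ Y ∪ W),
      if Tup.restrict hGU s' = Tup.restrict hGU t then
        margin R (Finset.subset_univ (X ∪ Z ∪ Y ∪ W)) (Tup.restrict hUU s') *
          margin R (Finset.subset_univ X) (Tup.restrict hXU s') else 0 :=
    Finset.sum_congr rfl fun s' _ => by rw [h'' s']
  have hq_out : (∑ s' : Tup Dom (X ∪ Z ∪ Y ∪ W),
      if Tup.restrict hGU s' = Tup.restrict hGU t then
        margin R (Finset.subset_univ (X ∪ Y)) (Tup.restrict hXYU s') *
          margin R (Finset.subset_univ (X ∪ Z ∪ W)) (Tup.restrict hBU s') else 0)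
      = margin R (Finset.subset_univ (X ∪ Y)) (Tup.restrict hXYU t) *
        ∑ s' : Tup Dom (X ∪ Z ∪ Y ∪ W),
          if Tup.restrict hGU s' = Tup.restrict hGU t then
            margin R (Finset.subset_univ (X ∪ Z ∪ W)) (Tup.restrict hBU s') else 0 := by
    rw [Finset.mul_sum]
    apply Finset.sum_congr rfl
    intro s' _
    by_cases hc : Tup.restrict hGU s' = Tup.restrict hGU t
    · rw [if_pos hc, if_pos hc, hconstq s' hc]
    · rw [if_neg hc, if_neg hc, mul_zero]
  have hp_out : (∑ s' : Tup Dom (X ∪ Z ∪ Y ∪ W),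
      if Tup.restrict hGU s' = Tup.restrict hGU t then
        margin R (Finset.subset_univ (X ∪ Z ∪ Y ∪ W)) (Tup.restrict hUU s') *
          margin R (Finset.subset_univ X) (Tup.restrict hXU s') else 0)
      = (∑ s' : Tup Dom (X ∪ Z ∪ Y ∪ W),
          if Tup.restrict hGU s' = Tup.restrict hGU t then
            margin R (Finset.subset_univ (X ∪ Z ∪ Y ∪ W)) (Tup.restrict hUU s') else 0) *
        margin R (Finset.subset_univ X) (Tup.restrict hXU t) := by
    rw [Finset.sum_mul]
    apply Finset.sum_congr rfl
    intro s' _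
    by_cases hc : Tup.restrict hGU s' = Tup.restrict hGU t
    · rw [if_pos hc, if_pos hc, hconstp s' hc]
    · rw [if_neg hc, if_neg hc, zero_mul]
  -- the two glue identities
  have gB : (∑ s' : Tup Dom (X ∪ Z ∪ Y ∪ W),
      if Tup.restrict hGU s' = Tup.restrict hGU t then
        margin R (Finset.subset_univ (X ∪ Z ∪ W)) (Tup.restrict hBU s') else 0)
      = margin R (Finset.subset_univ (X ∪ Z)) (Tup.restrict hXZU t) := by
    have hcov : X ∪ Z ∪ Y ∪ W ⊆ (X ∪ Z ∪ Y) ∪ (X ∪ Z ∪ W) := by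
      intro a ha; simp only [Finset.mem_union] at ha ⊢; tauto
    have hCA : X ∪ Z ⊆ X ∪ Z ∪ Y := Finset.subset_union_left
    have hCB : X ∪ Z ⊆ X ∪ Z ∪ W := Finset.subset_union_left
    have hABC : ∀ a ∈ X ∪ Z ∪ Y, a ∈ X ∪ Z ∪ W → a ∈ X ∪ Z := by
      intro a h1 h2
      rcases Finset.mem_union.mp h1 with h1' | hY'
      · exact h1'
      · rcases Finset.mem_union.mp h2 with h2' | hW'
        · exact h2'
        · exact (Finset.disjoint_left.mp hYW hY' hW').elim
    exact WU.glue hGU hBU hcov hCA hCB hABC R t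
  have gF : (∑ s' : Tup Dom (X ∪ Z ∪ Y ∪ W),
      if Tup.restrict hGU s' = Tup.restrict hGU t then
        margin R (Finset.subset_univ (X ∪ Z ∪ Y ∪ W)) (Tup.restrict hUU s') else 0)
      = margin R (Finset.subset_univ (X ∪ Z ∪ Y)) (Tup.restrict hGU t) := by
    have hcov : X ∪ Z ∪ Y ∪ W ⊆ (X ∪ Z ∪ Y) ∪ (X ∪ Z ∪ Y ∪ W) :=
      Finset.subset_union_right
    exact WU.glue hGU hUU hcov (Finset.Subset.refl _) hGU (fun a ha _ => ha) R t
  -- the two key identities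
  have e1 : margin R (Finset.subset_univ (X ∪ Y)) (Tup.restrict hXYU t) *
      margin R (Finset.subset_univ (X ∪ Z ∪ W)) (Tup.restrict hBU t) =
      margin R (Finset.subset_univ (X ∪ Z ∪ Y ∪ W)) (Tup.restrict hUU t) *
      margin R (Finset.subset_univ X) (Tup.restrict hXU t) := h'' t
  have e2 : margin R (Finset.subset_univ (X ∪ Y)) (Tup.restrict hXYU t) *
      margin R (Finset.subset_univ (X ∪ Z)) (Tup.restrict hXZU t) =
      margin R (Finset.subset_univ (X ∪ Z ∪ Y)) (Tup.restrict hGU t) *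
      margin R (Finset.subset_univ X) (Tup.restrict hXU t) := by
    rw [← gB, ← gF]
    exact (hq_out.symm.trans hsum).trans hp_out
  -- finish
  set q := margin R (Finset.subset_univ (X ∪ Y)) (Tup.restrict hXYU t) with hqdef
  set b := margin R (Finset.subset_univ (X ∪ Z ∪ W)) (Tup.restrict hBU t) with hbdef
  set f := margin R (Finset.subset_univ (X ∪ Z ∪ Y ∪ W)) (Tup.restrict hUU t) with hfdef
  set p := margin R (Finset.subset_univ X) (Tup.restrict hXU t) with hpdef
  set sg := margin R (Finset.subset_univ (X ∪ Z ∪ Y)) (Tup.restrict hGU t) with hsgdef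
  set r := margin R (Finset.subset_univ (X ∪ Z)) (Tup.restrict hXZU t) with hrdef
  show sg * b = f * r
  by_cases hq0 : q = 0
  · have hs0 : sg = 0 := WU.margin_zero_mono hpos.1 hsubq R hGU t hq0
    have hf0 : f = 0 := WU.margin_zero_mono hpos.1 hXYU R hUU t hq0
    rw [hs0, hf0, zero_mul, zero_mul]
  · apply hmc q _ _ hq0
    calc q * (sg * b) = sg * (q * b) := by ring
      _ = sg * (f * p) := by rw [e1]
      _ = f * (sg * p) := by ring
      _ = f * (q * r) := by rw [← e2]
      _ = q * (f * r) := by ring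
end

section
/- The Contraction rule is sound for K-relations over any nontrivial positive and multiplicatively cancellative commutative semiring K: for every K-relation R over a finite schema V with finite nonempty domains and pairwise disjoint X, Y, Z, W ⊆ V, if R satisfies CI(X; Y, Z) and CI(X∪Z; Y, W), then R satisfies CI(X; Y, Z∪W). -/
/-! # Preliminaries: K-relations over semirings -/

open Finset

variable {V : Type*}

/-! The marginals of `R` at the restrictions of one tuple `t` are linked by the two
hypotheses through the common factor `R(t[X∪Z])`. Where it is nonzero it cancels; where it
vanishes, positivity makes every marginal on a superset of `X ∪ Z` vanish as well, and both
sides of the claimed identity are `0`. -/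

theorem plusPos.eq_zero_of_sum_eq_zero {K : Type*} [CommSemiring K] (hpp : plusPos K)
    {ι : Type*} {s : Finset ι} {f : ι → K} (h : ∑ i ∈ s, f i = 0) {i : ι} (hi : i ∈ s) :
    f i = 0 := by
  classical
  rw [← add_sum_erase s f hi] at h
  exact (hpp _ _ h).1

theorem mulCanc.mul_eq_mul_of_mul_eq_mul {K : Type*} [CommSemiring K] (hmc : mulCanc K)
    {a b c d e f : K} (h₁ : a * c = d * b) (h₂ : d * e = f * c)
    (hc : c = 0 → e = 0 ∧ f = 0) : a * e = f * b := by
  by_cases hc0 : c = 0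
  · obtain ⟨rfl, rfl⟩ := hc hc0
    simp
  · apply hmc c _ _ hc0
    calc c * (a * e) = (a * c) * e := by ring
      _ = (d * e) * b := by rw [h₁]; ring
      _ = c * (f * b) := by rw [h₂]; ring

section marginAt

variable [DecidableEq V] {K : Type*} [CommSemiring K] {Dom : V → Type*}
  [∀ a, Fintype (Dom a)] {S U : Finset V} (R : Tup Dom S → K) (hU : U ⊆ S) (t : Tup Dom U)

/-- Junk value `0` unless `A ⊆ U`; taking `A` as a plain argument lets marginals be rewritten
along equalities of sets such as `X ∪ Z ∪ Y = X ∪ Y ∪ Z`. -/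
noncomputable def marginAt (A : Finset V) : K :=
  if h : A ⊆ U then margin R (h.trans hU) (Tup.restrict h t) else 0

variable {R hU t}

theorem marginAt_of_subset {A : Finset V} (h : A ⊆ U) (hA : A ⊆ S) :
    marginAt R hU t A = margin R hA (Tup.restrict h t) :=
  dif_pos h

theorem marginAt_eq_zero_of_subset (hpp : plusPos K) {A B : Finset V} (hAB : A ⊆ B)
    (hB : B ⊆ U) (h₀ : marginAt R hU t A = 0) : marginAt R hU t B = 0 := by
  rw [marginAt_of_subset (hAB.trans hB) (hAB.trans (hB.trans hU))] at h₀
  rw [marginAt_of_subset hB (hB.trans hU)]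
  classical
  refine sum_eq_zero fun s _ => ite_eq_right_iff.2 fun hs => ?_
  exact (if_pos (congrArg (Tup.restrict hAB) hs)).symm.trans
    (hpp.eq_zero_of_sum_eq_zero h₀ (mem_univ s))

theorem satCI_iff_forall_marginAt {X Y Z : Finset V} (hX : X ⊆ S) (hY : Y ⊆ S)
    (hZ : Z ⊆ S) :
    satCI R hX hY hZ ↔ ∀ (U : Finset V) (hU : U ⊆ S) (t : Tup Dom U), X ∪ Y ∪ Z ⊆ U →
      marginAt R hU t (X ∪ Y) * marginAt R hU t (X ∪ Z) =
        marginAt R hU t (X ∪ Y ∪ Z) * marginAt R hU t X := by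
  constructor
  · intro h U hU t hXYZ
    rw [marginAt_of_subset (subXY.trans hXYZ) (union_subset hX hY),
      marginAt_of_subset (subXZ.trans hXYZ) (union_subset hX hZ),
      marginAt_of_subset hXYZ (union_subset (union_subset hX hY) hZ),
      marginAt_of_subset (subL.trans hXYZ) hX]
    exact h (Tup.restrict hXYZ t)
  · intro h t
    have := h _ (union_subset (union_subset hX hY) hZ) t subset_rfl
    rwa [marginAt_of_subset subXY (union_subset hX hY),
      marginAt_of_subset subXZ (union_subset hX hZ),
      marginAt_of_subset subset_rfl (union_subset (union_subset hX hY) hZ),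
      marginAt_of_subset subL hX] at this

end marginAt

theorem satCI.contraction [DecidableEq V] {K : Type*} [CommSemiring K] {Dom : V → Type*}
    [∀ a, Fintype (Dom a)] (hpp : plusPos K) (hmc : mulCanc K) {S X Y Z W : Finset V}
    {R : Tup Dom S → K} {hX : X ⊆ S} {hY : Y ⊆ S} {hZ : Z ⊆ S} {hW : W ⊆ S}
    (h₁ : satCI R hX hY hZ) (h₂ : satCI R (union_subset hX hZ) hY hW) :
    satCI R hX hY (union_subset hZ hW) := by
  rw [satCI_iff_forall_marginAt] at h₁ h₂ ⊢
  intro U hU t hsub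
  have e₁ := h₁ U hU t (subset_trans (by grind) hsub)
  have e₂ := h₂ U hU t (subset_trans (by grind) hsub)
  rw [union_right_comm X Z Y, union_assoc (X ∪ Y) Z W, union_assoc X Z W] at e₂
  refine hmc.mul_eq_mul_of_mul_eq_mul e₁ e₂ fun h₀ => ⟨?_, ?_⟩
  · exact marginAt_eq_zero_of_subset hpp (by grind) (subset_trans (by grind) hsub) h₀
  · exact marginAt_eq_zero_of_subset hpp (by grind) hsub h₀

theorem contraction_sound_general
    [DecidableEq V] [Fintype V] {Dom : V → Type*}
    [∀ a, Fintype (Dom a)]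
    {K : Type*} [CommSemiring K]
    (hpos : posSemiring K) (hmc : mulCanc K)
    {X Y Z W : Finset V}
    (R : Tup Dom (Finset.univ : Finset V) → K)
    (h1 : satCI R (Finset.subset_univ X) (Finset.subset_univ Y) (Finset.subset_univ Z))
    (h2 : satCI R (Finset.subset_univ (X ∪ Z)) (Finset.subset_univ Y)
      (Finset.subset_univ W)) :
    satCI R (Finset.subset_univ X) (Finset.subset_univ Y)
      (Finset.subset_univ (Z ∪ W)) :=
  h1.contraction hpos.1 hmc h2

/-- Contraction is sound for `K`-relations over any nontrivial positive,
multiplicatively cancellative commutative semiring. -/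
theorem contraction_sound
    [DecidableEq V] [Fintype V] {Dom : V → Type*}
    [∀ a, Fintype (Dom a)] [∀ a, Nonempty (Dom a)]
    {K : Type*} [CommSemiring K] [Nontrivial K]
    (hpos : posSemiring K) (hmc : mulCanc K)
    {X Y Z W : Finset V}
    (hXY : Disjoint X Y) (hXZ : Disjoint X Z) (hXW : Disjoint X W)
    (hYZ : Disjoint Y Z) (hYW : Disjoint Y W) (hZW : Disjoint Z W)
    (R : Tup Dom (Finset.univ : Finset V) → K)
    (h1 : satCI R (Finset.subset_univ X) (Finset.subset_univ Y) (Finset.subset_univ Z))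
    (h2 : satCI R (Finset.subset_univ (X ∪ Z)) (Finset.subset_univ Y)
      (Finset.subset_univ W)) :
    satCI R (Finset.subset_univ X) (Finset.subset_univ Y)
      (Finset.subset_univ (Z ∪ W)) :=
  contraction_sound_general hpos hmc R h1 h2
end

section
/- The Interaction rule is sound for total K-relations over any nontrivial positive and multiplicatively cancellative commutative semiring K: for every total K-relation R over a finite schema V with finite nonempty domains and pairwise disjoint X, Y, Z, W ⊆ V, if R satisfies CI(X∪W; Y, Z) and CI(X∪Z; Y, W), then R satisfies CI(X; Y, Z∪W). -/
/-! # Preliminaries: K-relations over semirings -/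

open Finset

variable {V : Type*}

/-! ### Auxiliary machinery -/

section Aux

variable [DecidableEq V] [Fintype V] {Dom : V → Type*} [∀ a, Fintype (Dom a)]
  {K : Type*} [CommSemiring K]

/-- In a ⊕-positive semiring, if a finite sum is zero then every summand is zero. -/
theorem plusPos.sum_eq_zero (hp : plusPos K) {ι : Type*} (s : Finset ι) (f : ι → K)
    (h : ∑ i ∈ s, f i = 0) : ∀ i ∈ s, f i = 0 := by
  classical
  induction s using Finset.induction_on with
  | empty => simp
  | insert _ _ hx ih =>
    rw [Finset.sum_insert hx] at h
    obtain ⟨h1, h2⟩ := hp _ _ h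
    intro i hi
    rcases Finset.mem_insert.mp hi with rfl | hi
    · exact h1
    · exact ih h2 i hi

/-- Extend a tuple over `S` to a tuple over `univ` by arbitrary values. -/
noncomputable def Tup.ext [∀ a, Nonempty (Dom a)] {S : Finset V} (u : Tup Dom S) :
    Tup Dom (Finset.univ : Finset V) :=
  fun a => if h : a.1 ∈ S then u ⟨a.1, h⟩ else Classical.arbitrary _

theorem Tup.restrict_ext [∀ a, Nonempty (Dom a)] {S : Finset V} (u : Tup Dom S)
    (h : S ⊆ Finset.univ) : Tup.restrict h (Tup.ext u) = u := by
  funext a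
  simp only [Tup.restrict, Tup.ext, a.2, dif_pos]

/-- Every marginal of a total relation is nonzero. -/
theorem margin_ne_zero [∀ a, Nonempty (Dom a)]
    (R : Tup Dom (Finset.univ : Finset V) → K) (htotal : ∀ t, R t ≠ 0)
    (hp : plusPos K) {S : Finset V} (h : S ⊆ Finset.univ) (u : Tup Dom S) :
    margin R h u ≠ 0 := by
  intro h0
  have := hp.sum_eq_zero _ _ h0 (Tup.ext u) (Finset.mem_univ _)
  rw [if_pos (Tup.restrict_ext u h)] at this
  exact htotal _ this

/-- Marginal of a full tuple: `mg R A t = (margin of R on A) (t[A])`. -/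
noncomputable def mg (R : Tup Dom (Finset.univ : Finset V) → K) (A : Finset V)
    (t : Tup Dom (Finset.univ : Finset V)) : K :=
  margin R (Finset.subset_univ A) (Tup.restrict (Finset.subset_univ A) t)

theorem mg_congr_set (R : Tup Dom (Finset.univ : Finset V) → K) {A B : Finset V}
    (hAB : A = B) (t : Tup Dom (Finset.univ : Finset V)) : mg R A t = mg R B t := by
  subst hAB; rfl

/-- Update the values of a full tuple on `W`. -/
def upd {W : Finset V} (t : Tup Dom (Finset.univ : Finset V)) (w : Tup Dom W) :
    Tup Dom (Finset.univ : Finset V) :=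
  fun a => if h : a.1 ∈ W then w ⟨a.1, h⟩ else t a

theorem mg_upd (R : Tup Dom (Finset.univ : Finset V) → K) {A W : Finset V}
    (hAW : Disjoint A W) (t : Tup Dom (Finset.univ : Finset V)) (w : Tup Dom W) :
    mg R A (upd t w) = mg R A t := by
  unfold mg
  congr 1
  funext a
  simp only [Tup.restrict, upd, Finset.disjoint_left.mp hAW a.2, dif_neg,
    not_false_iff]

theorem restrict_union_upd {A W : Finset V} (hAW : Disjoint A W)
    (s t : Tup Dom (Finset.univ : Finset V)) (w : Tup Dom W) :
    Tup.restrict (Finset.subset_univ (A ∪ W)) s =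
        Tup.restrict (Finset.subset_univ (A ∪ W)) (upd t w) ↔
      Tup.restrict (Finset.subset_univ A) s = Tup.restrict (Finset.subset_univ A) t ∧
        Tup.restrict (Finset.subset_univ W) s = w := by
  constructor
  · intro h
    constructor
    · funext a
      have := congrFun h ⟨a.1, Finset.mem_union_left _ a.2⟩
      simpa [Tup.restrict, upd, Finset.disjoint_left.mp hAW a.2] using this
    · funext a
      have := congrFun h ⟨a.1, Finset.mem_union_right _ a.2⟩
      simpa [Tup.restrict, upd, a.2] using this
  · rintro ⟨h1, h2⟩
    funext a
    rcases Finset.mem_union.mp a.2 with ha | ha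
    · have := congrFun h1 ⟨a.1, ha⟩
      have hw : a.1 ∉ W := Finset.disjoint_left.mp hAW ha
      simpa [Tup.restrict, upd, hw] using this
    · have := congrFun h2 ⟨a.1, ha⟩
      simpa [Tup.restrict, upd, ha] using this

/-- Summing the marginal over all updates on a disjoint set `W` marginalizes `W` out. -/
theorem sum_upd (R : Tup Dom (Finset.univ : Finset V) → K) (A W : Finset V)
    (hAW : Disjoint A W) (t : Tup Dom (Finset.univ : Finset V)) :
    ∑ w : Tup Dom W, mg R (A ∪ W) (upd t w) = mg R A t := by
  classical
  unfold mg margin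
  rw [Finset.sum_comm]
  refine Finset.sum_congr rfl fun s _ => ?_
  simp only [restrict_union_upd hAW]
  by_cases hP : Tup.restrict (Finset.subset_univ A) s =
      Tup.restrict (Finset.subset_univ A) t
  · simp [hP, Finset.sum_ite_eq]
  · simp [hP]

/-- Restatement of `satCI` over the full schema in terms of `mg`. -/
theorem satCI_iff_mg [∀ a, Nonempty (Dom a)]
    (R : Tup Dom (Finset.univ : Finset V) → K) {X Y Z : Finset V} :
    satCI R (Finset.subset_univ X) (Finset.subset_univ Y) (Finset.subset_univ Z) ↔
      ∀ t : Tup Dom (Finset.univ : Finset V),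
        mg R (X ∪ Y) t * mg R (X ∪ Z) t = mg R (X ∪ Y ∪ Z) t * mg R X t := by
  constructor
  · intro h t
    exact h (Tup.restrict (Finset.subset_univ (X ∪ Y ∪ Z)) t)
  · intro h u
    rw [← Tup.restrict_ext u (Finset.subset_univ (X ∪ Y ∪ Z))]
    exact h (Tup.ext u)

end Aux

/-- Interaction is sound for total `K`-relations over any nontrivial positive,
multiplicatively cancellative commutative semiring. -/
theorem interaction_sound_total
    [DecidableEq V] [Fintype V] {Dom : V → Type*}
    [∀ a, Fintype (Dom a)] [∀ a, Nonempty (Dom a)]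
    {K : Type*} [CommSemiring K] [Nontrivial K]
    (hpos : posSemiring K) (hmc : mulCanc K)
    {X Y Z W : Finset V}
    (hXY : Disjoint X Y) (hXZ : Disjoint X Z) (hXW : Disjoint X W)
    (hYZ : Disjoint Y Z) (hYW : Disjoint Y W) (hZW : Disjoint Z W)
    (R : Tup Dom (Finset.univ : Finset V) → K)
    (htotal : ∀ t, R t ≠ 0)
    (h1 : satCI R (Finset.subset_univ (X ∪ W)) (Finset.subset_univ Y)
      (Finset.subset_univ Z))
    (h2 : satCI R (Finset.subset_univ (X ∪ Z)) (Finset.subset_univ Y)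
      (Finset.subset_univ W)) :
    satCI R (Finset.subset_univ X) (Finset.subset_univ Y)
      (Finset.subset_univ (Z ∪ W)) := by
  rw [satCI_iff_mg] at h1 h2 ⊢
  -- nonzero marginals
  have hnz : ∀ (A : Finset V) (s : Tup Dom (Finset.univ : Finset V)), mg R A s ≠ 0 :=
    fun A s => margin_ne_zero R htotal hpos.1 _ _
  -- disjointness facts
  have hXYW : Disjoint (X ∪ Y) W := Finset.disjoint_union_left.mpr ⟨hXW, hYW⟩
  have hXZW : Disjoint (X ∪ Z) W := Finset.disjoint_union_left.mpr ⟨hXW, hZW⟩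
  have hXZYW : Disjoint (X ∪ Z ∪ Y) W := Finset.disjoint_union_left.mpr ⟨hXZW, hYW⟩
  -- set identities
  have e1 : X ∪ W ∪ Y ∪ Z = X ∪ Z ∪ Y ∪ W := by
    ext a; simp only [Finset.mem_union]; tauto
  have e2 : X ∪ W ∪ Z = X ∪ Z ∪ W := by
    ext a; simp only [Finset.mem_union]; tauto
  have e3 : X ∪ W ∪ Y = X ∪ Y ∪ W := by
    ext a; simp only [Finset.mem_union]; tauto
  have e4 : X ∪ Z ∪ Y ∪ W = X ∪ Y ∪ (Z ∪ W) := by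
    ext a; simp only [Finset.mem_union]; tauto
  have e5 : X ∪ Z ∪ W = X ∪ (Z ∪ W) := Finset.union_assoc X Z W
  -- the key pointwise identity obtained by cancelling the common marginal
  have star : ∀ s : Tup Dom (Finset.univ : Finset V),
      mg R (X ∪ Y ∪ W) s * mg R (X ∪ Z) s = mg R (X ∪ Z ∪ Y) s * mg R (X ∪ W) s := by
    intro s
    have E1 := h1 s
    have E2 := h2 s
    rw [mg_congr_set R e1, mg_congr_set R e2, mg_congr_set R e3] at E1
    -- E1 : mg (X∪Y∪W) * mg (X∪Z∪W) = mg (X∪Z∪Y∪W) * mg (X∪W)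
    -- E2 : mg (X∪Z∪Y) * mg (X∪Z∪W) = mg (X∪Z∪Y∪W) * mg (X∪Z)
    refine hmc (mg R (X ∪ Z ∪ W) s) _ _ (hnz _ _) ?_
    calc mg R (X ∪ Z ∪ W) s * (mg R (X ∪ Y ∪ W) s * mg R (X ∪ Z) s)
        = (mg R (X ∪ Y ∪ W) s * mg R (X ∪ Z ∪ W) s) * mg R (X ∪ Z) s := by ring
      _ = (mg R (X ∪ Z ∪ Y ∪ W) s * mg R (X ∪ W) s) * mg R (X ∪ Z) s := by rw [E1]
      _ = (mg R (X ∪ Z ∪ Y ∪ W) s * mg R (X ∪ Z) s) * mg R (X ∪ W) s := by ring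
      _ = (mg R (X ∪ Z ∪ Y) s * mg R (X ∪ Z ∪ W) s) * mg R (X ∪ W) s := by rw [E2]
      _ = mg R (X ∪ Z ∪ W) s * (mg R (X ∪ Z ∪ Y) s * mg R (X ∪ W) s) := by ring
  intro t
  -- derive CI(X; Y, Z) at t by marginalizing star over W
  have hA : mg R (X ∪ Y) t * mg R (X ∪ Z) t = mg R (X ∪ Z ∪ Y) t * mg R X t := by
    have l1 : ∑ w : Tup Dom W, mg R (X ∪ Y ∪ W) (upd t w) * mg R (X ∪ Z) (upd t w)
        = mg R (X ∪ Y) t * mg R (X ∪ Z) t := by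
      rw [← sum_upd R (X ∪ Y) W hXYW t, Finset.sum_mul]
      exact Finset.sum_congr rfl fun w _ => by rw [mg_upd R hXZW]
    have l2 : ∑ w : Tup Dom W, mg R (X ∪ Z ∪ Y) (upd t w) * mg R (X ∪ W) (upd t w)
        = mg R (X ∪ Z ∪ Y) t * mg R X t := by
      rw [← sum_upd R X W hXW t, Finset.mul_sum]
      exact Finset.sum_congr rfl fun w _ => by rw [mg_upd R hXZYW]
    rw [← l1, ← l2]
    exact Finset.sum_congr rfl fun w _ => star (upd t w)
  -- combine with h2 at t
  have E2 := h2 t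
  rw [mg_congr_set R e4, mg_congr_set R e5] at E2
  -- E2 : mg (X∪Z∪Y) * mg (X∪(Z∪W)) = mg (X∪Y∪(Z∪W)) * mg (X∪Z)
  refine hmc (mg R (X ∪ Z) t) _ _ (hnz _ _) ?_
  calc mg R (X ∪ Z) t * (mg R (X ∪ Y) t * mg R (X ∪ (Z ∪ W)) t)
      = (mg R (X ∪ Y) t * mg R (X ∪ Z) t) * mg R (X ∪ (Z ∪ W)) t := by ring
    _ = (mg R (X ∪ Z ∪ Y) t * mg R X t) * mg R (X ∪ (Z ∪ W)) t := by rw [hA]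
    _ = (mg R (X ∪ Z ∪ Y) t * mg R (X ∪ (Z ∪ W)) t) * mg R X t := by ring
    _ = (mg R (X ∪ Y ∪ (Z ∪ W)) t * mg R (X ∪ Z) t) * mg R X t := by rw [E2]
    _ = mg R (X ∪ Z) t * (mg R (X ∪ Y ∪ (Z ∪ W)) t * mg R X t) := by ring
end

section
/- The CI introduction rule is sound for K-relations over any nontrivial ⊕-positive commutative semiring K: for every K-relation R over a finite schema V with finite nonempty domains and pairwise disjoint X, Y, Z ⊆ V, if R satisfies the functional dependency X → Y, then R satisfies the conditional independence CI(X; Y, Z). -/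
/-! # Preliminaries: K-relations over semirings -/

open Finset

variable {V : Type*}

/-! Fix `t`. If some support tuple of `R` agrees with `t` on both `X` and `Y`, then by the FD
every support tuple agreeing with `t` on `X` also agrees with it on `Y`; so the marginals at `t`
on `X ∪ Y` and `X ∪ Y ∪ Z` equal those on `X` and `X ∪ Z`, and the CI equation is commutativity
of multiplication. Otherwise both of these marginals vanish and both sides are `0`. -/

theorem Tup.restrict_union_eq_iff [DecidableEq V] {Dom : V → Type*} {S A B : Finset V}
    (hA : A ⊆ S) (hB : B ⊆ S) (s : Tup Dom S) (u : Tup Dom (A ∪ B)) :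
    Tup.restrict (union_subset hA hB) s = u ↔
      Tup.restrict hA s = Tup.restrict subset_union_left u ∧
        Tup.restrict hB s = Tup.restrict subset_union_right u := by
  refine ⟨fun h => ⟨?_, ?_⟩, fun ⟨hsA, hsB⟩ => ?_⟩
  · funext a
    exact congrFun h ⟨a.1, mem_union_left _ a.2⟩
  · funext a
    exact congrFun h ⟨a.1, mem_union_right _ a.2⟩
  · funext a
    rcases mem_union.mp a.2 with ha | ha
    · exact congrFun hsA ⟨a.1, ha⟩
    · exact congrFun hsB ⟨a.1, ha⟩

open Classical in
theorem margin_union {K : Type*} [CommSemiring K] [DecidableEq V] {Dom : V → Type*}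
    [∀ a, Fintype (Dom a)] {S A B : Finset V} (R : Tup Dom S → K) (hA : A ⊆ S) (hB : B ⊆ S)
    (u : Tup Dom (A ∪ B)) :
    margin R (union_subset hA hB) u =
      ∑ s, if Tup.restrict hA s = Tup.restrict subset_union_left u ∧
        Tup.restrict hB s = Tup.restrict subset_union_right u then R s else 0 :=
  sum_congr rfl fun s _ => if_congr (Tup.restrict_union_eq_iff hA hB s u) rfl rfl

section SumIte

variable {M α : Type*} [AddCommMonoid M] [Fintype α] (f : α → M) {P Q : α → Prop}
  [DecidablePred P] [DecidablePred Q]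

theorem sum_ite_and_eq_of_imp (h : ∀ a, f a ≠ 0 → P a → Q a) :
    (∑ a, if P a ∧ Q a then f a else 0) = ∑ a, if P a then f a else 0 := by
  refine sum_congr rfl fun a _ => ?_
  by_cases ha : f a = 0
  · simp [ha]
  · exact if_congr ⟨And.left, fun hP => ⟨hP, h a ha hP⟩⟩ rfl rfl

theorem sum_ite_and_eq_zero_of_imp_not (h : ∀ a, f a ≠ 0 → P a → ¬ Q a) :
    (∑ a, if P a ∧ Q a then f a else 0) = 0 :=
  sum_eq_zero fun a _ => ite_eq_right_iff.mpr fun hPQ => by_contra fun ha => h a ha hPQ.1 hPQ.2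

end SumIte

theorem satFD.forall_imp_or_forall_imp_not {K : Type*} [Zero K] {Dom : V → Type*}
    {S U W : Finset V} {R : Tup Dom S → K} {hU : U ⊆ S} {hW : W ⊆ S} (hfd : satFD R hU hW)
    (u : Tup Dom U) (w : Tup Dom W) :
    (∀ s, R s ≠ 0 → Tup.restrict hU s = u → Tup.restrict hW s = w) ∨
      ∀ s, R s ≠ 0 → Tup.restrict hU s = u → Tup.restrict hW s ≠ w := by
  by_cases h : ∃ s₀, R s₀ ≠ 0 ∧ Tup.restrict hU s₀ = u ∧ Tup.restrict hW s₀ = w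
  · obtain ⟨s₀, hs₀, hs₀U, hs₀W⟩ := h
    exact Or.inl fun s hs hsU => (hfd s s₀ hs hs₀ (hsU.trans hs₀U.symm)).trans hs₀W
  · push Not at h
    exact Or.inr h

theorem satCI_of_satFD {K : Type*} [CommSemiring K] [DecidableEq V] {Dom : V → Type*}
    [∀ a, Fintype (Dom a)] {S X Y Z : Finset V} {R : Tup Dom S → K} {hX : X ⊆ S}
    {hY : Y ⊆ S} (hZ : Z ⊆ S) (hfd : satFD R hX hY) : satCI R hX hY hZ := by
  classical
  intro t
  set x := Tup.restrict subL t
  set y := Tup.restrict subM t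
  set z := Tup.restrict subR t
  have hmXY : margin R (union_subset hX hY) (Tup.restrict subset_union_left t) =
      ∑ s, if Tup.restrict hX s = x ∧ Tup.restrict hY s = y then R s else 0 :=
    margin_union R hX hY _
  have hmXZ : margin R (union_subset hX hZ) (Tup.restrict subXZ t) =
      ∑ s, if Tup.restrict hX s = x ∧ Tup.restrict hZ s = z then R s else 0 :=
    margin_union R hX hZ _
  have hmXYZ : margin R (union_subset (union_subset hX hY) hZ) t =
      ∑ s, if (Tup.restrict hX s = x ∧ Tup.restrict hZ s = z) ∧ Tup.restrict hY s = y
        then R s else 0 := by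
    refine (margin_union R (union_subset hX hY) hZ t).trans
      (sum_congr rfl fun s _ => if_congr ?_ rfl rfl)
    rw [Tup.restrict_union_eq_iff]
    exact and_right_comm
  have hmX : margin R hX x = ∑ s, if Tup.restrict hX s = x then R s else 0 := rfl
  rw [hmXY, hmXZ, hmXYZ, hmX]
  rcases hfd.forall_imp_or_forall_imp_not x y with hagree | hdisagree
  · rw [sum_ite_and_eq_of_imp R hagree,
      sum_ite_and_eq_of_imp R fun s hs hsXZ => hagree s hs hsXZ.1, mul_comm]
  · rw [sum_ite_and_eq_zero_of_imp_not R hdisagree,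
      sum_ite_and_eq_zero_of_imp_not R fun s hs hsXZ => hdisagree s hs hsXZ.1, zero_mul, zero_mul]

theorem ciIntroduction_sound_general
    [DecidableEq V] [Fintype V] {Dom : V → Type*}
    [∀ a, Fintype (Dom a)]
    {K : Type*} [CommSemiring K]
    {X Y Z : Finset V}
    (R : Tup Dom (Finset.univ : Finset V) → K)
    (hfd : satFD R (Finset.subset_univ X) (Finset.subset_univ Y)) :
    satCI R (Finset.subset_univ X) (Finset.subset_univ Y) (Finset.subset_univ Z) :=
  satCI_of_satFD _ hfd

/-- CI introduction is sound for `K`-relations over any nontrivial `⊕`-positive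
commutative semiring: an FD `X → Y` entails `CI(X; Y, Z)`. -/
theorem ciIntroduction_sound
    [DecidableEq V] [Fintype V] {Dom : V → Type*}
    [∀ a, Fintype (Dom a)] [∀ a, Nonempty (Dom a)]
    {K : Type*} [CommSemiring K] [Nontrivial K] (hpos : plusPos K)
    {X Y Z : Finset V}
    (hXY : Disjoint X Y) (hXZ : Disjoint X Z) (hYZ : Disjoint Y Z)
    (R : Tup Dom (Finset.univ : Finset V) → K)
    (hfd : satFD R (Finset.subset_univ X) (Finset.subset_univ Y)) :
    satCI R (Finset.subset_univ X) (Finset.subset_univ Y) (Finset.subset_univ Z) :=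
  ciIntroduction_sound_general R hfd
end

section
/- The FD contraction rule is sound for K-relations over any nontrivial positive and multiplicatively cancellative commutative semiring K: for every K-relation R over a finite schema V with finite nonempty domains and pairwise disjoint X, Y, Z ⊆ V, if R satisfies the conditional independence CI(X; Y, Z) and the functional dependency X∪Y → Z, then R satisfies the functional dependency X → Z. -/
/-! # Preliminaries: K-relations over semirings -/

open Finset

variable {V : Type*}

/-!
Over a positive semiring, `CI(X; Y, Z)` forces the support of `R` to be closed under
gluing: if `t` and `t'` lie in the support and agree on `X`, then the tuple that follows
`t` on `X ∪ Y` and `t'` on `Z` (well defined as `Y` and `Z` are disjoint) has nonzero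
marginal on `X ∪ Y ∪ Z`, because the two factors on the left of the CI equation are
nonzero. A tuple `w` of the support above it agrees with `t` on `X ∪ Y`, so `X ∪ Y → Z`
gives `t[Z] = w[Z] = t'[Z]`.
-/

section Support

variable [DecidableEq V] {Dom : V → Type*} [∀ a, Fintype (Dom a)]
  {K : Type*} [CommSemiring K]

theorem margin_restrict_ne_zero (hpos : plusPos K) {X Y : Finset V}
    (R : Tup Dom X → K) (h : Y ⊆ X) {t : Tup Dom X} (ht : R t ≠ 0) :
    margin R h (t.restrict h) ≠ 0 := by
  classical
  intro h0
  rw [margin, ← Finset.add_sum_erase _ _ (Finset.mem_univ t), if_pos rfl] at h0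
  exact ht (hpos _ _ h0).1

theorem exists_restrict_eq_of_margin_ne_zero {X Y : Finset V} {R : Tup Dom X → K}
    {h : Y ⊆ X} {u : Tup Dom Y} (hm : margin R h u ≠ 0) :
    ∃ t, R t ≠ 0 ∧ t.restrict h = u := by
  obtain ⟨t, -, ht⟩ := Finset.exists_ne_zero_of_sum_ne_zero hm
  refine ⟨t, ?_⟩
  split_ifs at ht with he
  exacts [⟨ht, he⟩, absurd rfl ht]

end Support

theorem Tup.exists_restrict_eq_restrict_eq [DecidableEq V] {Dom : V → Type*}
    {S A B : Finset V} (hA : A ⊆ S) (hB : B ⊆ S) (t t' : Tup Dom S)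
    (h : ∀ a : S, a.1 ∈ A → a.1 ∈ B → t a = t' a) :
    ∃ s : Tup Dom S, s.restrict hA = t.restrict hA ∧ s.restrict hB = t'.restrict hB := by
  refine ⟨fun a => if a.1 ∈ A then t a else t' a, ?_, ?_⟩
  · funext a
    simp [Tup.restrict, a.2]
  · funext a
    simp only [Tup.restrict]
    split_ifs with ha
    exacts [h _ ha a.2, rfl]

theorem satCI.exists_ne_zero_restrict_eq [DecidableEq V] {Dom : V → Type*}
    [∀ a, Fintype (Dom a)] {K : Type*} [CommSemiring K] (hpos : posSemiring K)
    {S X Y Z : Finset V} {hX : X ⊆ S} {hY : Y ⊆ S} {hZ : Z ⊆ S} {R : Tup Dom S → K}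
    (hci : satCI R hX hY hZ) (hYZ : Disjoint Y Z) {t t' : Tup Dom S}
    (ht : R t ≠ 0) (ht' : R t' ≠ 0) (hXt : t.restrict hX = t'.restrict hX) :
    ∃ w, R w ≠ 0 ∧ w.restrict (union_subset hX hY) = t.restrict (union_subset hX hY) ∧
      w.restrict hZ = t'.restrict hZ := by
  obtain ⟨s, hsXY, hsXZ⟩ :=
    Tup.exists_restrict_eq_restrict_eq (union_subset hX hY) (union_subset hX hZ) t t'
      fun a haXY haXZ => by
        have haX : a.1 ∈ X := by
          simp only [mem_union] at haXY haXZ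
          rcases haXY with haX | haY
          · exact haX
          · exact haXZ.resolve_right (disjoint_left.mp hYZ haY)
        exact congrFun hXt ⟨a.1, haX⟩
  have hXYZ : X ∪ Y ∪ Z ⊆ S := union_subset (union_subset hX hY) hZ
  have hs : margin R hXYZ (s.restrict hXYZ) ≠ 0 := by
    intro h0
    have hci_s := hci (s.restrict hXYZ)
    change margin R _ (s.restrict (union_subset hX hY)) *
      margin R _ (s.restrict (union_subset hX hZ)) = _ at hci_s
    rw [h0, zero_mul, hsXY, hsXZ] at hci_s
    rcases hpos.2 _ _ hci_s with h | h
    exacts [margin_restrict_ne_zero hpos.1 R _ ht h, margin_restrict_ne_zero hpos.1 R _ ht' h]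
  obtain ⟨w, hw, hws⟩ := exists_restrict_eq_of_margin_ne_zero hs
  exact ⟨w, hw, (congrArg (Tup.restrict subXY) hws).trans hsXY,
    (congrArg (Tup.restrict subR) hws).trans
      (congrArg (Tup.restrict (subset_union_right (s₁ := X))) hsXZ)⟩

theorem fdContraction_sound_general
    [DecidableEq V] [Fintype V] {Dom : V → Type*}
    [∀ a, Fintype (Dom a)]
    {K : Type*} [CommSemiring K]
    (hpos : posSemiring K)
    {X Y Z : Finset V}
    (hYZ : Disjoint Y Z)
    (R : Tup Dom (Finset.univ : Finset V) → K)
    (hci : satCI R (Finset.subset_univ X) (Finset.subset_univ Y) (Finset.subset_univ Z))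
    (hfd : satFD R (Finset.subset_univ (X ∪ Y)) (Finset.subset_univ Z)) :
    satFD R (Finset.subset_univ X) (Finset.subset_univ Z) := by
  intro t t' ht ht' hXt
  obtain ⟨w, hw, hwXY, hwZ⟩ := hci.exists_ne_zero_restrict_eq hpos hYZ ht ht' hXt
  rw [← hwZ]
  exact (hfd w t hw ht hwXY).symm

/-- FD contraction is sound for `K`-relations over any nontrivial positive,
multiplicatively cancellative commutative semiring: `CI(X; Y, Z)` and
`X ∪ Y → Z` entail `X → Z`. -/
theorem fdContraction_sound
    [DecidableEq V] [Fintype V] {Dom : V → Type*}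
    [∀ a, Fintype (Dom a)] [∀ a, Nonempty (Dom a)]
    {K : Type*} [CommSemiring K] [Nontrivial K]
    (hpos : posSemiring K) (hmc : mulCanc K)
    {X Y Z : Finset V}
    (hXY : Disjoint X Y) (hXZ : Disjoint X Z) (hYZ : Disjoint Y Z)
    (R : Tup Dom (Finset.univ : Finset V) → K)
    (hci : satCI R (Finset.subset_univ X) (Finset.subset_univ Y) (Finset.subset_univ Z))
    (hfd : satFD R (Finset.subset_univ (X ∪ Y)) (Finset.subset_univ Z)) :
    satFD R (Finset.subset_univ X) (Finset.subset_univ Z) :=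
  fdContraction_sound_general hpos hYZ R hci hfd
end

section
/- Let K be a nontrivial positive commutative semiring, X, Y, Z pairwise disjoint finite sets of variables with finite nonempty domains, and R a K-relation over X∪Y∪Z with nonempty support. If R satisfies the functional dependency X → Y, then the decomposition of R along X∪Y and X∪Z is a lossless-join decomposition: R[X∪Y] ⋈ R[X∪Z] ≡ R. -/
/-! # Preliminaries: K-relations over semirings -/

open Finset

variable {V : Type*}

section Helpers

variable [DecidableEq V] {Dom : V → Type*} [∀ a, Fintype (Dom a)]
  {K : Type*} [CommSemiring K]

lemma restrict_eq_iff {S W : Finset V} (h : W ⊆ S) (t t' : Tup Dom S) :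
    Tup.restrict h t = Tup.restrict h t' ↔
      ∀ a (ha : a ∈ W), t ⟨a, h ha⟩ = t' ⟨a, h ha⟩ := by
  constructor
  · intro he a ha; exact congrFun he ⟨a, ha⟩
  · intro he; funext a; exact he a.1 a.2

lemma restrict_eq_of_subset {S W₁ W₂ : Finset V} (h₁ : W₁ ⊆ S) (h₂ : W₂ ⊆ S)
    (hsub : W₁ ⊆ W₂) {t t' : Tup Dom S}
    (he : Tup.restrict h₂ t = Tup.restrict h₂ t') :
    Tup.restrict h₁ t = Tup.restrict h₁ t' := by
  rw [restrict_eq_iff] at he ⊢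
  intro a ha; exact he a (hsub ha)

lemma restrict_union_eq {S W₁ W₂ : Finset V} (h₁ : W₁ ⊆ S) (h₂ : W₂ ⊆ S)
    {t t' : Tup Dom S}
    (e₁ : Tup.restrict h₁ t = Tup.restrict h₁ t')
    (e₂ : Tup.restrict h₂ t = Tup.restrict h₂ t') :
    Tup.restrict (Finset.union_subset h₁ h₂) t =
      Tup.restrict (Finset.union_subset h₁ h₂) t' := by
  rw [restrict_eq_iff] at e₁ e₂ ⊢
  intro a ha
  rcases Finset.mem_union.mp ha with h | h
  · exact e₁ a h
  · exact e₂ a h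

lemma eq_of_agree₃ {X Y Z : Finset V} {t t' : Tup Dom (X ∪ Y ∪ Z)}
    (hx : Tup.restrict subL t = Tup.restrict subL t')
    (hy : Tup.restrict subM t = Tup.restrict subM t')
    (hz : Tup.restrict subR t = Tup.restrict subR t') : t = t' := by
  funext a
  obtain ⟨a, ha⟩ := a
  rcases Finset.mem_union.mp ha with h | h
  · rcases Finset.mem_union.mp h with h' | h'
    · exact congrFun hx ⟨a, h'⟩
    · exact congrFun hy ⟨a, h'⟩
  · exact congrFun hz ⟨a, h⟩

lemma plusPos_sum {ι : Type*} (hp : plusPos K) {s : Finset ι} {f : ι → K}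
    (h : ∑ i ∈ s, f i = 0) : ∀ i ∈ s, f i = 0 := by
  classical
  induction s using Finset.induction_on with
  | empty => simp
  | insert _ _ hx ih =>
    rw [Finset.sum_insert hx] at h
    obtain ⟨h1, h2⟩ := hp _ _ h
    intro i hi
    rcases Finset.mem_insert.mp hi with rfl | hi
    · exact h1
    · exact ih h2 i hi

lemma prod_ne_zero' {ι : Type*} [Nontrivial K] (hz : noZD K) {s : Finset ι} {f : ι → K}
    (h : ∀ i ∈ s, f i ≠ 0) : ∏ i ∈ s, f i ≠ 0 := by
  classical
  induction s using Finset.induction_on with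
  | empty => simpa using (one_ne_zero : (1:K) ≠ 0)
  | insert _ _ hx ih =>
    intro h0
    rw [Finset.prod_insert hx] at h0
    rcases hz _ _ h0 with h' | h'
    · exact h _ (Finset.mem_insert_self _ _) h'
    · exact ih (fun i hi => h i (Finset.mem_insert_of_mem hi)) h'

lemma margin_ne_zero_exists {X W : Finset V} (R : Tup Dom X → K) (h : W ⊆ X)
    (u : Tup Dom W) (hne : margin R h u ≠ 0) :
    ∃ t, Tup.restrict h t = u ∧ R t ≠ 0 := by
  classical
  by_contra hc
  push_neg at hc
  apply hne
  apply Finset.sum_eq_zero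
  intro t _
  split_ifs with ht
  · exact hc t ht
  · rfl

lemma margin_margin_s13 {X W₁ W₂ : Finset V} (R : Tup Dom X → K)
    (h₂ : W₂ ⊆ X) (h₁ : W₁ ⊆ W₂) (u : Tup Dom W₁) :
    margin (margin R h₂) h₁ u = margin R (h₁.trans h₂) u := by
  classical
  unfold margin
  calc (∑ s : Tup Dom W₂, if Tup.restrict h₁ s = u then
          (∑ t : Tup Dom X, if Tup.restrict h₂ t = s then R t else 0) else 0)
      = ∑ s : Tup Dom W₂, ∑ t : Tup Dom X,
          if Tup.restrict h₂ t = s ∧ Tup.restrict h₁ s = u then R t else 0 := by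
        apply Finset.sum_congr rfl; intro s _
        split_ifs with h
        · apply Finset.sum_congr rfl; intro t _; simp [h]
        · symm; apply Finset.sum_eq_zero; intro t _; simp [h]
    _ = ∑ t : Tup Dom X, ∑ s : Tup Dom W₂,
          if Tup.restrict h₂ t = s ∧ Tup.restrict h₁ s = u then R t else 0 :=
        Finset.sum_comm
    _ = ∑ t : Tup Dom X, if Tup.restrict (h₁.trans h₂) t = u then R t else 0 := by
        apply Finset.sum_congr rfl; intro t _
        rw [Finset.sum_eq_single (Tup.restrict h₂ t)]
        · simp only [eq_self_iff_true, true_and]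
          rfl
        · intro s _ hs
          rw [if_neg]
          exact fun hc => hs hc.1.symm
        · intro hmem; exact absurd (Finset.mem_univ _) hmem

end Helpers

/-- Over a positive semiring, a functional dependency `X → Y` entails that the
decomposition along `X ∪ Y` and `X ∪ Z` is a lossless-join one. -/
theorem fd_implies_losslessJoin
    [DecidableEq V] {Dom : V → Type*} [∀ a, Fintype (Dom a)] [∀ a, Nonempty (Dom a)]
    {K : Type*} [CommSemiring K] [Nontrivial K] (hpos : posSemiring K)
    {X Y Z : Finset V} (hXY : Disjoint X Y) (hXZ : Disjoint X Z) (hYZ : Disjoint Y Z)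
    (R : Tup Dom (X ∪ Y ∪ Z) → K) (hsupp : ∃ t, R t ≠ 0)
    (hfd : satFD R (subL (X := X) (Y := Y) (Z := Z)) subM) :
    equivRel
      (joinOn (margin R (subXY (X := X) (Y := Y) (Z := Z))) (margin R subXZ)
        subXY subXZ unionSplit) R := by
  classical
  have hZ'X : ∀ a, a ∈ (X ∪ Y) ∩ (X ∪ Z) ↔ a ∈ X := by
    intro a
    simp only [Finset.mem_inter, Finset.mem_union]
    constructor
    · rintro ⟨h1 | h1, h2 | h2⟩
      · exact h1
      · exact h1
      · exact h2
      · exact absurd h2 (Finset.disjoint_left.mp hYZ h1)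
    · intro h; exact ⟨Or.inl h, Or.inl h⟩
  have hXsubZ' : X ⊆ (X ∪ Y) ∩ (X ∪ Z) := fun a ha => (hZ'X a).mpr ha
  have hZ'S : (X ∪ Y) ∩ (X ∪ Z) ⊆ X ∪ Y ∪ Z :=
    (Finset.inter_subset_right).trans subXZ
  have hmm : ∀ v : Tup Dom ((X ∪ Y) ∩ (X ∪ Z)),
      margin (margin R subXZ) Finset.inter_subset_right v = margin R hZ'S v :=
    fun v => margin_margin_s13 R subXZ Finset.inter_subset_right v
  refine ⟨1, ∏ v : Tup Dom ((X ∪ Y) ∩ (X ∪ Z)),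
      if margin R hZ'S v ≠ 0 then margin R hZ'S v else 1, one_ne_zero, ?_, ?_⟩
  · apply prod_ne_zero' hpos.2
    intro v _
    split_ifs with h
    · exact h
    · exact one_ne_zero
  · intro t
    rw [one_mul]
    simp only [joinOn, cfun, hmm]
    set ut : Tup Dom ((X ∪ Y) ∩ (X ∪ Z)) :=
      Tup.restrict ((Finset.inter_subset_right (s₁ := X ∪ Y)).trans subXZ) t with hut
    have hutS : ut = Tup.restrict hZ'S t := rfl
    by_cases hM0 : margin R hZ'S ut = 0
    · -- degenerate case: everything is zero
      have hall : ∀ t', Tup.restrict hZ'S t' = ut → R t' = 0 := by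
        intro t' ht'
        simp only [margin] at hM0
        have := plusPos_sum hpos.1 hM0 t' (Finset.mem_univ t')
        rwa [if_pos ht'] at this
      have hRt : R t = 0 := hall t rfl
      have hA : margin R subXY (Tup.restrict subXY t) = 0 := by
        apply Finset.sum_eq_zero
        intro t₁ _
        split_ifs with h1
        · exact hall t₁
            (restrict_eq_of_subset hZ'S subXY Finset.inter_subset_left h1)
        · rfl
      rw [hA, hRt, zero_mul, zero_mul, mul_zero]
    · -- main case
      have hPC : (∏ v : Tup Dom ((X ∪ Y) ∩ (X ∪ Z)),
            if margin R hZ'S v ≠ 0 then margin R hZ'S v else 1) =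
          margin R hZ'S ut *
            ∏ v : Tup Dom ((X ∪ Y) ∩ (X ∪ Z)),
              if margin R hZ'S v ≠ 0 ∧ v ≠ ut then margin R hZ'S v else 1 := by
        have hC : (∏ v : Tup Dom ((X ∪ Y) ∩ (X ∪ Z)),
              if margin R hZ'S v ≠ 0 ∧ v ≠ ut then margin R hZ'S v else 1) =
            ∏ v ∈ Finset.univ.erase ut,
              if margin R hZ'S v ≠ 0 then margin R hZ'S v else 1 := by
          rw [← Finset.mul_prod_erase Finset.univ
            (fun v => if margin R hZ'S v ≠ 0 ∧ v ≠ ut then margin R hZ'S v else 1)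
            (Finset.mem_univ ut)]
          rw [if_neg (by simp), one_mul]
          apply Finset.prod_congr rfl
          intro v hv
          have hne : v ≠ ut := Finset.ne_of_mem_erase hv
          by_cases h : margin R hZ'S v ≠ 0
          · rw [if_pos ⟨h, hne⟩, if_pos h]
          · rw [if_neg (fun hc => h hc.1), if_neg h]
        rw [hC, ← Finset.mul_prod_erase Finset.univ
          (fun v => if margin R hZ'S v ≠ 0 then margin R hZ'S v else 1)
          (Finset.mem_univ ut), if_pos hM0]
      have key : margin R subXY (Tup.restrict subXY t) *
          margin R subXZ (Tup.restrict subXZ t) = margin R hZ'S ut * R t := by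
        by_cases hRt : R t = 0
        · rw [hRt, mul_zero]
          by_contra hAB
          have hAne : margin R subXY (Tup.restrict subXY t) ≠ 0 :=
            left_ne_zero_of_mul hAB
          have hBne : margin R subXZ (Tup.restrict subXZ t) ≠ 0 :=
            right_ne_zero_of_mul hAB
          obtain ⟨t₁, he₁, hR₁⟩ := margin_ne_zero_exists R subXY _ hAne
          obtain ⟨t₂, he₂, hR₂⟩ := margin_ne_zero_exists R subXZ _ hBne
          have h1X : Tup.restrict subL t₁ = Tup.restrict subL t :=
            restrict_eq_of_subset subL subXY Finset.subset_union_left he₁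
          have h1Y : Tup.restrict subM t₁ = Tup.restrict subM t :=
            restrict_eq_of_subset subM subXY Finset.subset_union_right he₁
          have h2X : Tup.restrict subL t₂ = Tup.restrict subL t :=
            restrict_eq_of_subset subL subXZ Finset.subset_union_left he₂
          have h2Z : Tup.restrict subR t₂ = Tup.restrict subR t :=
            restrict_eq_of_subset subR subXZ Finset.subset_union_right he₂
          have h21 : Tup.restrict subM t₂ = Tup.restrict subM t₁ :=
            hfd t₂ t₁ hR₂ hR₁ (h2X.trans h1X.symm)
          have ht2 : t₂ = t := eq_of_agree₃ h2X (h21.trans h1Y) h2Z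
          exact hR₂ (ht2 ▸ hRt)
        · have hBt : margin R subXZ (Tup.restrict subXZ t) = R t := by
            simp only [margin]
            rw [Finset.sum_eq_single t]
            · rw [if_pos rfl]
            · intro t₂ _ hne
              split_ifs with h2
              · by_cases hR₂ : R t₂ = 0
                · exact hR₂
                · exfalso
                  apply hne
                  have h2X : Tup.restrict subL t₂ = Tup.restrict subL t :=
                    restrict_eq_of_subset subL subXZ Finset.subset_union_left h2
                  have h2Z : Tup.restrict subR t₂ = Tup.restrict subR t :=
                    restrict_eq_of_subset subR subXZ Finset.subset_union_right h2
                  have h2Y := hfd t₂ t hR₂ hRt h2X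
                  exact eq_of_agree₃ h2X h2Y h2Z
              · rfl
            · intro h; exact absurd (Finset.mem_univ t) h
          have hAt : margin R subXY (Tup.restrict subXY t) = margin R hZ'S ut := by
            simp only [margin]
            apply Finset.sum_congr rfl
            intro t₁ _
            by_cases hR₁ : R t₁ = 0
            · split_ifs <;> simp [hR₁]
            · have hiff : (Tup.restrict subXY t₁ = Tup.restrict subXY t) ↔
                  (Tup.restrict hZ'S t₁ = ut) := by
                constructor
                · intro h
                  exact restrict_eq_of_subset hZ'S subXY Finset.inter_subset_left h
                · intro hz'
                  have hX1 : Tup.restrict subL t₁ = Tup.restrict subL t :=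
                    restrict_eq_of_subset subL hZ'S hXsubZ' hz'
                  have hY1 := hfd t₁ t hR₁ hRt hX1
                  exact restrict_union_eq subL subM hX1 hY1
              by_cases hc : Tup.restrict subXY t₁ = Tup.restrict subXY t
              · rw [if_pos hc, if_pos (hiff.mp hc)]
              · rw [if_neg hc, if_neg (fun h => hc (hiff.mpr h))]
          rw [hAt, hBt]
      rw [hPC, key]
      ring
end
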